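/- arXiv:2302.11048 — 7 statements merged into one kernel-verified Lean document; each statement's English description precedes it below -/
import Mathlib

section
/- Let Π be a finite nonempty set, M_α a finite nonempty set, and for each M ∈ M_α and π ∈ Π let J_M(π) ∈ ℝ be given. Suppose M* ∈ M_α, πref ∈ Π, and π̂ attains the maximum of π ↦ min_{M ∈ M_α} (J_M(π) − J_M(πref)) over Π. Then for every π_c ∈ Π, J_{M*}(π_c) − J_{M*}(π̂) ≤ (J_{M*}(π_c) − J_{M*}(πref)) − min_{M ∈ M_α} (J_M(π_c) − J_M(πref)), and consequently J_{M*}(π_c) − J_{M*}(π̂) ≤ max_{M ∈ M_α} |J_{M*}(π_c) − J_M(π_c)| + max_{M ∈ M_α} |J_{M*}(πref) − J_M(πref)|. -/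
open Finset

/-- abstract absolute-performance decomposition for relative pessimism.
`P` is the finite nonempty policy class Π, `M` is the finite nonempty version space M_α,
`J m π` is the return of policy `π` in model `m`, `Mstar ∈ M_α` is the true model,
`piref ∈ Π` and `pihat` maximizes `π ↦ min_{m ∈ M_α} (J m π − J m πref)` over Π.
Then for every comparator policy `pic ∈ Π`:
`J_{M*}(π_c) − J_{M*}(π̂) ≤ (J_{M*}(π_c) − J_{M*}(πref)) − min_{m} (J_m π_c − J_m πref)`, and
`J_{M*}(π_c) − J_{M*}(π̂) ≤ max_m |J_{M*} π_c − J_m π_c| + max_m |J_{M*} πref − J_m πref|`. -/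
theorem armor_relative_pessimism_absolute_bound
    {P M : Type*} [Fintype P] [Fintype M] [Nonempty P] [Nonempty M]
    (J : M → P → ℝ) (Mstar : M) (piref pihat : P)
    (hmax : ∀ π : P,
      univ.inf' univ_nonempty (fun m => J m π - J m piref)
        ≤ univ.inf' univ_nonempty (fun m => J m pihat - J m piref)) :
    ∀ pic : P,
      (J Mstar pic - J Mstar pihat
        ≤ (J Mstar pic - J Mstar piref)
          - univ.inf' univ_nonempty (fun m => J m pic - J m piref)) ∧
      (J Mstar pic - J Mstar pihat
        ≤ univ.sup' univ_nonempty (fun m => |J Mstar pic - J m pic|)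
          + univ.sup' univ_nonempty (fun m => |J Mstar piref - J m piref|)) := by
  intro pic
  have h1 : J Mstar pic - J Mstar pihat
      ≤ (J Mstar pic - J Mstar piref)
        - univ.inf' univ_nonempty (fun m => J m pic - J m piref) := by
    have h2 : univ.inf' univ_nonempty (fun m => J m pic - J m piref)
        ≤ J Mstar pihat - J Mstar piref :=
      le_trans (hmax pic) (inf'_le _ (mem_univ Mstar))
    linarith
  refine ⟨h1, ?_⟩
  obtain ⟨m, _, hm⟩ := exists_mem_eq_inf' (univ_nonempty (α := M))
      (fun m => J m pic - J m piref)
  rw [hm] at h1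
  have a1 : J Mstar pic - J m pic ≤ |J Mstar pic - J m pic| := le_abs_self _
  have a2 : J m piref - J Mstar piref ≤ |J Mstar piref - J m piref| := by
    rw [abs_sub_comm]; exact le_abs_self _
  have b1 : |J Mstar pic - J m pic|
      ≤ univ.sup' univ_nonempty (fun m => |J Mstar pic - J m pic|) :=
    le_sup' (fun m => |J Mstar pic - J m pic|) (mem_univ m)
  have b2 : |J Mstar piref - J m piref|
      ≤ univ.sup' univ_nonempty (fun m => |J Mstar piref - J m piref|) :=
    le_sup' (fun m => |J Mstar piref - J m piref|) (mem_univ m)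
  linarith
end

section
/- There exists an absolute constant C > 0 with the following property. Let X be a set, μ a distribution on X, f* : X → [0,1], and let (x_i, y_i), i = 1,…,n, be i.i.d. with x_i ~ μ, y_i ∈ [0,1], and E[y_i | x_i] = f*(x_i). Let F be a finite class of functions from X to [0,1]. Then for any δ ∈ (0,1], with probability at least 1 − δ, simultaneously for every f ∈ F: n · E_{x~μ}[ (f(x) − f*(x))² ] ≤ C · ( Σ_{i=1}^n (f(x_i) − y_i)² − Σ_{i=1}^n (f*(x_i) − y_i)² + log(|F|/δ) ). -/
/-!
Fix `f ∈ F` and write `Z(x, y) = (f x - y)² - (f* x - y)²` for its excess loss on one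
sample. Given `x`, the label `y ∈ [0, 1]` has mean `f* x`, so Hoeffding's lemma gives
`E[exp (-Z) | x] ≤ exp (-(f x - f* x)² / 2)`, and since
`exp (-u / 2) ≤ 1 - u / 3 ≤ exp (-u / 3)` on `[0, 1]`, `E[exp (-Z)] ≤ exp (-r / 3)` with
`r = E (f - f*)²`. Chernoff's bound for the i.i.d. sum then makes
`∑ Z < n r / 3 - log (|F| / δ)` have probability at most `δ / |F|`, and a union bound over `F`
gives the theorem with `C = 3`.

Neither `f` nor `f*` is assumed measurable, so the event is bounded through its measurable
subsets, by induction on `n` along the disintegration `ν = μ ⊗ κ`: for fixed `x` the excess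
loss is measurable in `y`, and in `x` it is dominated by a measurable majorant.
-/

open MeasureTheory ProbabilityTheory Real
open scoped ENNReal

lemma ENNReal.ofReal_exp_add (a b : ℝ) :
    ENNReal.ofReal (exp (a + b)) = ENNReal.ofReal (exp a) * ENNReal.ofReal (exp b) := by
  rw [exp_add, ENNReal.ofReal_mul (exp_nonneg a)]

lemma exp_neg_half_le_one_sub_div_three {u : ℝ} (hu : u ∈ Set.Icc (0 : ℝ) 1) :
    exp (-u / 2) ≤ 1 - u / 3 := by
  rw [neg_div, exp_neg, inv_le_comm₀ (exp_pos _) (by linarith [hu.2]), ← one_div]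
  refine le_trans ?_ (add_one_le_exp (u / 2))
  rw [div_le_iff₀ (by linarith [hu.2])]
  nlinarith [hu.1, hu.2]

lemma sq_sub_mem_Icc {a b : ℝ} (ha : a ∈ Set.Icc (0 : ℝ) 1) (hb : b ∈ Set.Icc (0 : ℝ) 1) :
    (a - b) ^ 2 ∈ Set.Icc (0 : ℝ) 1 :=
  ⟨sq_nonneg _, by nlinarith [ha.1, ha.2, hb.1, hb.2]⟩

lemma sum_ofReal_exp_sub_log_mul_pow_le {ι : Type*} [Fintype ι] (r : ι → ℝ) (n : ℕ)
    {δ : ℝ} (hδ : 0 < δ) :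
    ∑ i, ENNReal.ofReal (exp (n * r i / 3 - log (Fintype.card ι / δ)))
        * ENNReal.ofReal (exp (-r i / 3)) ^ n ≤ ENNReal.ofReal δ := by
  have hterm (i : ι) : ENNReal.ofReal (exp (n * r i / 3 - log (Fintype.card ι / δ)))
      * ENNReal.ofReal (exp (-r i / 3)) ^ n
        = ENNReal.ofReal (exp (-log (Fintype.card ι / δ))) := by
    rw [← ENNReal.ofReal_pow (exp_nonneg _), ← exp_nat_mul, ← ENNReal.ofReal_exp_add]
    congr 2
    ring
  simp_rw [hterm, Finset.sum_const, Finset.card_univ, nsmul_eq_mul]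
  rcases Nat.eq_zero_or_pos (Fintype.card ι) with hk | hk
  · simp [hk]
  rw [← ENNReal.ofReal_natCast, ← ENNReal.ofReal_mul (Nat.cast_nonneg _), exp_neg,
    exp_log (by positivity), inv_div, mul_div_cancel₀ _ (by positivity)]

lemma lintegral_exp_neg_sq_sub_sq_le {κ : Measure ℝ} [IsProbabilityMeasure κ]
    (hκ : ∀ᵐ y ∂κ, y ∈ Set.Icc (0 : ℝ) 1) {m : ℝ} (hm : ∫ y, y ∂κ = m) (t : ℝ) :
    ∫⁻ y, ENNReal.ofReal (exp (-((t - y) ^ 2 - (m - y) ^ 2))) ∂κ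
      ≤ ENNReal.ofReal (exp (-(t - m) ^ 2 / 2)) := by
  have hoeffding := hasSubgaussianMGF_of_mem_Icc (X := id) aemeasurable_id hκ
  simp only [id, hm] at hoeffding
  have hsq : ∀ y, -((t - y) ^ 2 - (m - y) ^ 2) = -(t - m) ^ 2 + 2 * (t - m) * (y - m) := by
    intro y; ring
  simp_rw [hsq, ENNReal.ofReal_exp_add]
  rw [lintegral_const_mul' _ _ ENNReal.ofReal_ne_top,
    ← ofReal_integral_eq_lintegral_ofReal (hoeffding.integrable_exp_mul _)
      (Filter.Eventually.of_forall fun y => exp_nonneg _),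
    ← ENNReal.ofReal_mul (exp_nonneg _)]
  refine ENNReal.ofReal_le_ofReal ?_
  calc exp (-(t - m) ^ 2) * ∫ y, exp (2 * (t - m) * (y - m)) ∂κ
      ≤ exp (-(t - m) ^ 2)
          * exp (((‖(1 : ℝ) - 0‖₊ / 2) ^ 2 : NNReal) * (2 * (t - m)) ^ 2 / 2) := by
        gcongr
        exact hoeffding.mgf_le _
    _ = exp (-(t - m) ^ 2 / 2) := by
        rw [← exp_add]
        congr 1
        norm_num
        ring

/-- If `v` is not a.e.-measurable then `∫ x, v x ∂μ = 0` and `W = 1` works. -/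
lemma exists_measurable_majorant_exp_neg_half {X : Type*} [MeasurableSpace X] (μ : Measure X)
    [IsProbabilityMeasure μ] {v : X → ℝ} (hv : ∀ x, v x ∈ Set.Icc (0 : ℝ) 1) :
    ∃ W : X → ℝ≥0∞, Measurable W ∧
      (∀ᵐ x ∂μ, ENNReal.ofReal (exp (-v x / 2)) ≤ W x) ∧
      ∫⁻ x, W x ∂μ ≤ ENNReal.ofReal (exp (-(∫ x, v x ∂μ) / 3)) := by
  by_cases hmeas : AEStronglyMeasurable v μ
  · have hae : (fun x => ENNReal.ofReal (exp (-v x / 2)))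
        =ᵐ[μ] fun x => ENNReal.ofReal (exp (-hmeas.mk v x / 2)) := by
      filter_upwards [hmeas.ae_eq_mk] with x hx
      rw [hx]
    refine ⟨_, hmeas.stronglyMeasurable_mk.measurable.neg.div_const 2 |>.exp.ennreal_ofReal,
      hae.le, ?_⟩
    have hint : Integrable v μ :=
      Integrable.of_mem_Icc 0 1 hmeas.aemeasurable (Filter.Eventually.of_forall hv)
    have hint' : Integrable (fun x => 1 - v x / 3) μ := (integrable_const 1).sub (hint.div_const 3)
    calc ∫⁻ x, ENNReal.ofReal (exp (-hmeas.mk v x / 2)) ∂μ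
        = ∫⁻ x, ENNReal.ofReal (exp (-v x / 2)) ∂μ := (lintegral_congr_ae hae).symm
      _ ≤ ∫⁻ x, ENNReal.ofReal (1 - v x / 3) ∂μ := lintegral_mono fun x =>
          ENNReal.ofReal_le_ofReal (exp_neg_half_le_one_sub_div_three (hv x))
      _ = ENNReal.ofReal (1 - (∫ x, v x ∂μ) / 3) := by
          rw [← ofReal_integral_eq_lintegral_ofReal hint' (Filter.Eventually.of_forall fun x => by
              simp only [Pi.zero_apply]; linarith [(hv x).2]),
            integral_sub (integrable_const 1) (hint.div_const 3), integral_div]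
          simp
      _ ≤ ENNReal.ofReal (exp (-(∫ x, v x ∂μ) / 3)) := by
          gcongr
          linarith [add_one_le_exp (-(∫ x, v x ∂μ) / 3)]
  · refine ⟨1, measurable_const, Filter.Eventually.of_forall fun x => ?_, ?_⟩
    · simpa using div_nonpos_of_nonpos_of_nonneg (neg_nonpos.2 (hv x).1) zero_le_two
    · simp [integral_undef fun h => hmeas h.1]

section PiFinCons

variable {α : Type*} [MeasurableSpace α] {n : ℕ}

lemma measurable_fin_cons :
    Measurable fun p : α × (Fin n → α) => (Fin.cons p.1 p.2 : Fin (n + 1) → α) := by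
  refine measurable_pi_lambda _ fun j => ?_
  cases j using Fin.cases with
  | zero => simpa using measurable_fst
  | succ j => simpa using measurable_snd.eval

variable (ν : Measure α) [SigmaFinite ν]

lemma measure_pi_fin_succ_eq_lintegral {N : Set (Fin (n + 1) → α)} (hN : MeasurableSet N) :
    Measure.pi (fun _ => ν) N
      = ∫⁻ q, Measure.pi (fun _ : Fin n => ν) {d | Fin.cons q d ∈ N} ∂ν := by
  have e := (measurePreserving_piFinSuccAbove (fun _ : Fin (n + 1) => ν) 0).symm
  rw [← e.measure_preimage hN.nullMeasurableSet, Measure.prod_apply]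
  · simp [MeasurableEquiv.piFinSuccAbove_symm_apply, Fin.insertNthEquiv, Fin.insertNth_zero']
    rfl
  · exact hN.preimage (MeasurableEquiv.measurable _)

lemma measurable_measure_pi_fin_cons {N : Set (Fin (n + 1) → α)} (hN : MeasurableSet N) :
    Measurable fun q => Measure.pi (fun _ : Fin n => ν) {d | Fin.cons q d ∈ N} :=
  measurable_measure_prodMk_left (measurable_fin_cons hN)

end PiFinCons

section Chernoff

variable {X Y ι : Type*} [MeasurableSpace X] [MeasurableSpace Y] [Fintype ι]
  {μ : Measure X} [IsProbabilityMeasure μ] {κ : Kernel X Y} [IsMarkovKernel κ]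
  {Z : ι → X × Y → ℝ} {W : ι → X → ℝ≥0∞}

lemma lintegral_compProd_le_sum_mul (hZ : ∀ i x, Measurable fun y => Z i (x, y))
    (hW : ∀ i, Measurable (W i))
    (hZW : ∀ i, ∀ᵐ x ∂μ, ∫⁻ y, ENNReal.ofReal (exp (-Z i (x, y))) ∂κ x ≤ W i x)
    (A : ι → ℝ≥0∞) {g : X × Y → ℝ≥0∞} (hg : Measurable g)
    (hgZ : ∀ q, g q ≤ ∑ i, A i * ENNReal.ofReal (exp (-Z i q))) :
    ∫⁻ q, g q ∂(μ ⊗ₘ κ) ≤ ∑ i, A i * ∫⁻ x, W i x ∂μ := by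
  have hfiber : ∀ᵐ x ∂μ, ∫⁻ y, g (x, y) ∂κ x ≤ ∑ i, A i * W i x := by
    filter_upwards [ae_all_iff.2 hZW] with x hx
    have hmeas (i : ι) : Measurable fun y => ENNReal.ofReal (exp (-Z i (x, y))) :=
      (hZ i x).neg.exp.ennreal_ofReal
    calc ∫⁻ y, g (x, y) ∂κ x
        ≤ ∫⁻ y, ∑ i, A i * ENNReal.ofReal (exp (-Z i (x, y))) ∂κ x :=
          lintegral_mono fun y => hgZ (x, y)
      _ = ∑ i, A i * ∫⁻ y, ENNReal.ofReal (exp (-Z i (x, y))) ∂κ x := by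
          rw [lintegral_finsetSum _ fun i _ => (hmeas i).const_mul _]
          simp_rw [lintegral_const_mul _ (hmeas _)]
      _ ≤ ∑ i, A i * W i x := by gcongr with i; exact hx i
  calc ∫⁻ q, g q ∂(μ ⊗ₘ κ) = ∫⁻ x, ∫⁻ y, g (x, y) ∂κ x ∂μ := Measure.lintegral_compProd hg
    _ ≤ ∫⁻ x, ∑ i, A i * W i x ∂μ := lintegral_mono_ae hfiber
    _ = ∑ i, A i * ∫⁻ x, W i x ∂μ := by
        rw [lintegral_finsetSum _ fun i _ => (hW i).const_mul _]
        simp_rw [lintegral_const_mul _ (hW _)]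

/-- Stated for measurable subsets `N` of the event, since `Z i` need only be measurable in its
second argument. -/
theorem measure_pi_compProd_le_sum_exp (hZ : ∀ i x, Measurable fun y => Z i (x, y))
    (hW : ∀ i, Measurable (W i))
    (hZW : ∀ i, ∀ᵐ x ∂μ, ∫⁻ y, ENNReal.ofReal (exp (-Z i (x, y))) ∂κ x ≤ W i x)
    (n : ℕ) (c : ι → ℝ) {N : Set (Fin n → X × Y)} (hN : MeasurableSet N)
    (hNZ : ∀ d ∈ N, ∃ i, ∑ j, Z i (d j) < c i) :
    Measure.pi (fun _ => μ ⊗ₘ κ) N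
      ≤ ∑ i, ENNReal.ofReal (exp (c i)) * (∫⁻ x, W i x ∂μ) ^ n := by
  induction n generalizing c with
  | zero =>
    obtain rfl | ⟨d, hd⟩ := N.eq_empty_or_nonempty
    · simp
    obtain ⟨i, hi⟩ := hNZ d hd
    calc Measure.pi (fun _ => μ ⊗ₘ κ) N ≤ 1 := prob_le_one
      _ ≤ ENNReal.ofReal (exp (c i)) * (∫⁻ x, W i x ∂μ) ^ 0 := by
        simpa using one_le_exp (by simpa using hi.le)
      _ ≤ _ := Finset.single_le_sum
          (f := fun j => ENNReal.ofReal (exp (c j)) * (∫⁻ x, W j x ∂μ) ^ 0)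
          (fun j _ => zero_le) (Finset.mem_univ i)
  | succ n ih =>
    set A : ι → ℝ≥0∞ := fun i => ENNReal.ofReal (exp (c i)) * (∫⁻ x, W i x ∂μ) ^ n
    have hsection (q : X × Y) : Measure.pi (fun _ : Fin n => μ ⊗ₘ κ) {d | Fin.cons q d ∈ N}
        ≤ ∑ i, A i * ENNReal.ofReal (exp (-Z i q)) := by
      refine (ih (fun i => c i - Z i q) (measurable_prodMk_left (measurable_fin_cons hN))
        fun d hd => ?_).trans_eq ?_
      · obtain ⟨i, hi⟩ := hNZ _ hd
        refine ⟨i, ?_⟩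
        simp only [Fin.sum_univ_succ, Fin.cons_zero, Fin.cons_succ] at hi
        linarith
      · refine Finset.sum_congr rfl fun i _ => ?_
        rw [sub_eq_add_neg, ENNReal.ofReal_exp_add, mul_right_comm]
    calc Measure.pi (fun _ => μ ⊗ₘ κ) N
        = ∫⁻ q, Measure.pi (fun _ : Fin n => μ ⊗ₘ κ) {d | Fin.cons q d ∈ N} ∂(μ ⊗ₘ κ) :=
          measure_pi_fin_succ_eq_lintegral _ hN
      _ ≤ ∑ i, A i * ∫⁻ x, W i x ∂μ := lintegral_compProd_le_sum_mul hZ hW hZW A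
          (measurable_measure_pi_fin_cons _ hN) hsection
      _ = _ := by simp_rw [A, pow_succ, mul_assoc]

end Chernoff

lemma compProd_map_fst_condDistrib_snd {X Y : Type*} [MeasurableSpace X] [MeasurableSpace Y]
    [StandardBorelSpace Y] [Nonempty Y] (ν : Measure (X × Y)) [IsFiniteMeasure ν] :
    ν.map Prod.fst ⊗ₘ condDistrib Prod.snd Prod.fst ν = ν := by
  rw [compProd_map_condDistrib measurable_snd.aemeasurable]
  exact Measure.map_id

lemma ae_condDistrib_mem_Icc_and_integral_eq {X : Type*} [mX : MeasurableSpace X]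
    {ν : Measure (X × ℝ)} [IsProbabilityMeasure ν] {f : X → ℝ}
    (hy : ∀ᵐ p ∂ν, p.2 ∈ Set.Icc (0 : ℝ) 1)
    (hf : ν[(fun p : X × ℝ => p.2) | MeasurableSpace.comap Prod.fst mX]
      =ᵐ[ν] fun p => f p.1) :
    ∀ᵐ x ∂ν.map Prod.fst,
      (∀ᵐ y ∂condDistrib Prod.snd Prod.fst ν x, y ∈ Set.Icc (0 : ℝ) 1) ∧
        ∫ y, y ∂condDistrib Prod.snd Prod.fst ν x = f x := by
  have hint : Integrable (fun p : X × ℝ => p.2) ν :=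
    Integrable.of_mem_Icc 0 1 measurable_snd.aemeasurable hy
  have hmean : ∀ᵐ p ∂ν, ∫ y, y ∂condDistrib Prod.snd Prod.fst ν p.1 = f p.1 :=
    (condExp_ae_eq_integral_condDistrib' measurable_fst hint).symm.trans hf
  have hdis := compProd_map_fst_condDistrib_snd ν
  -- naming the kernel keeps `rw` from rewriting the `ν` inside it
  set κ := condDistrib Prod.snd Prod.fst ν
  rw [← hdis] at hy hmean
  filter_upwards [Measure.ae_ae_of_ae_compProd hy, Measure.ae_ae_of_ae_compProd hmean]
    with x hxy hxmean
  exact ⟨hxy, hxmean.exists.choose_spec⟩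

lemma one_sub_le_measure_of_forall_subset_compl {Ω : Type*} [MeasurableSpace Ω] {P : Measure Ω}
    [IsProbabilityMeasure P] {G : Set Ω} {ε : ℝ≥0∞}
    (h : ∀ N, MeasurableSet N → N ⊆ Gᶜ → P N ≤ ε) : 1 - ε ≤ P G := by
  have hT := measurableSet_toMeasurable P G
  calc 1 - ε ≤ 1 - P (toMeasurable P G)ᶜ :=
        tsub_le_tsub_left (h _ hT.compl (Set.compl_subset_compl.2 (subset_toMeasurable P G))) 1
    _ = P G := by
        rw [prob_compl_eq_one_sub hT, ENNReal.sub_sub_cancel ENNReal.one_ne_top prob_le_one,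
          measure_toMeasurable]

/-- least squares regression: uniform in-expectation error bound.
There is an absolute constant `C > 0` such that: the single-sample law `ν` on `X × ℝ`
draws `x ∼ μm` (the first marginal of `ν` is `μm`), has `y ∈ [0,1]` a.s., and has
conditional mean `E[y|x] = fstar x` (expressed via the conditional expectation with
respect to the σ-algebra generated by the first projection); the dataset of `n` pairs is
i.i.d. (product measure).  For any finite class `F` of `[0,1]`-valued functions, with
probability at least `1 − δ`, simultaneously for every `f ∈ F`:
`n E_{x∼μ}[(f x − fstar x)²]
  ≤ C (∑ⱼ (f xⱼ − yⱼ)² − ∑ⱼ (fstar xⱼ − yⱼ)² + log(|F|/δ))`. -/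
theorem regression_uniform_excess_risk_bound :
    ∃ C : ℝ, 0 < C ∧
      ∀ (X : Type) [mX : MeasurableSpace X]
        (μm : Measure X) [IsProbabilityMeasure μm]
        (fstar : X → ℝ), (∀ x, fstar x ∈ Set.Icc (0 : ℝ) 1) →
      ∀ (ν : Measure (X × ℝ)) [IsProbabilityMeasure ν],
        ν.map Prod.fst = μm →
        (∀ᵐ p ∂ν, p.2 ∈ Set.Icc (0 : ℝ) 1) →
        (ν[(fun p : X × ℝ => p.2) | MeasurableSpace.comap Prod.fst mX]
          =ᵐ[ν] fun p : X × ℝ => fstar p.1) →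
      ∀ (n : ℕ) (ι : Type) [Fintype ι]
        (F : ι → X → ℝ),
        (∀ i x, F i x ∈ Set.Icc (0 : ℝ) 1) →
      ∀ (δ : ℝ), δ ∈ Set.Ioc (0 : ℝ) 1 →
      ENNReal.ofReal (1 - δ) ≤
        (Measure.pi fun _ : Fin n => ν)
          {data | ∀ i : ι,
            (n : ℝ) * ∫ x, (F i x - fstar x) ^ 2 ∂μm
              ≤ C * ((∑ j : Fin n, (F i (data j).1 - (data j).2) ^ 2)
                  - (∑ j : Fin n, (fstar (data j).1 - (data j).2) ^ 2)
                  + Real.log ((Fintype.card ι : ℝ) / δ))} := by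
  refine ⟨3, by norm_num, ?_⟩
  intro X mX μm _ fstar hfstar ν _ hmap hy hce n ι _ F hF δ hδ
  set κ := condDistrib Prod.snd Prod.fst ν
  set r : ι → ℝ := fun i => ∫ x, (F i x - fstar x) ^ 2 ∂μm
  choose W hW hW_ge hW_le using fun i =>
    exists_measurable_majorant_exp_neg_half μm fun x => sq_sub_mem_Icc (hF i x) (hfstar x)
  have hZW (i : ι) : ∀ᵐ x ∂μm,
      ∫⁻ y, ENNReal.ofReal (exp (-((F i x - y) ^ 2 - (fstar x - y) ^ 2))) ∂κ x
        ≤ W i x := by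
    filter_upwards [hmap ▸ ae_condDistrib_mem_Icc_and_integral_eq hy hce, hW_ge i]
      with x ⟨hsupp, hmean⟩ hx
    exact (lintegral_exp_neg_sq_sub_sq_le hsupp hmean _).trans hx
  refine (one_sub_le_measure_of_forall_subset_compl fun N hN hNG => ?_).trans'
    (by rw [ENNReal.ofReal_sub 1 hδ.1.le, ENNReal.ofReal_one])
  rw [← compProd_map_fst_condDistrib_snd ν, hmap]
  calc Measure.pi (fun _ => μm ⊗ₘ κ) N
      ≤ ∑ i, ENNReal.ofReal (exp (n * r i / 3 - Real.log (Fintype.card ι / δ)))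
          * (∫⁻ x, W i x ∂μm) ^ n := by
        refine measure_pi_compProd_le_sum_exp
          (Z := fun i p => (F i p.1 - p.2) ^ 2 - (fstar p.1 - p.2) ^ 2)
          (fun i x => by dsimp only; fun_prop) hW hZW n _ hN fun d hd => ?_
        obtain ⟨i, hi⟩ : ∃ i, _ := by simpa using hNG hd
        exact ⟨i, by rw [Finset.sum_sub_distrib]; linarith⟩
    _ ≤ ∑ i, ENNReal.ofReal (exp (n * r i / 3 - Real.log (Fintype.card ι / δ)))
          * ENNReal.ofReal (exp (-r i / 3)) ^ n := by
        gcongr with i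
        exact hW_le i
    _ ≤ ENNReal.ofReal δ := sum_ofReal_exp_sub_log_mul_pow_le r n hδ.1
end

section
/- There exists an absolute constant c > 0 with the following property. Let S, A be finite nonempty sets, μ a distribution on S×A, M* = (P*, R*) with R* : S×A → [0,1] and P*(s'|s,a) > 0 for all (s,a,s'), Vmax ≥ 1, and let M be a finite class of models M = (P_M, R_M) with R_M : S×A → [0,1] and P_M everywhere positive, containing M*. Let the dataset consist of n i.i.d. tuples (s_i, a_i, r_i, s'_i) with (s_i, a_i) ~ μ, s'_i ~ P*(·|s_i, a_i), r_i ∈ [0,1] with E[r_i | s_i, a_i] = R*(s_i, a_i). Then for any δ ∈ (0,1], with probability at least 1 − δ: E_D(M*) − min_{M ∈ M} E_D(M) ≤ c · log(|M|/δ), where E_D(M) = Σ_{i=1}^n ( −log P_M(s'_i|s_i,a_i) + (R_M(s_i,a_i) − r_i)²/Vmax² ). -/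
/-!
For each model `M` of the class, `E_D(M*) - E_D(M) = ∑ᵢ Zᵢ` with i.i.d. summands
`Z = log (P_M / P*) + Δ`, `Δ = ((R* - r)² - (R_M - r)²) / Vmax²`. Convexity of `exp` gives
`exp (Z / 5) ≤ (P_M / P*) / 5 + (4 / 5) exp (Δ / 4)`. The first term has mean `1 / 5` since
`s' ∼ P*`; for the second, `exp (Δ / 4) ≤ 1 - β (r - R*)` with `β = (R* - R_M) / (2 Vmax²)`
(this is where `r, R*, R_M ∈ [0, 1]` and `Vmax ≥ 1` enter), whose conditional mean is `1`.
So `E[exp (Z / 5)] ≤ 1`, Markov's inequality for `∏ᵢ exp (Zᵢ / 5)` bounds the probability of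
`E_D(M*) - E_D(M) > 5 log (|M| / δ)` by `δ / |M|`, and a union bound over `M` finishes.

The sets `{s} × {a} × ℝ × {s'}` need not be measurable for the given σ-algebras on `S` and `A`;
they are null-measurable because their outer measures add up to `1`.
-/

open MeasureTheory Finset

/-- The model-fitting loss of a model `(P, R)` on a dataset of tuples `(s, a, r, s')`:
`E_D(M) = ∑ⱼ (−log P(s'ⱼ|sⱼ,aⱼ) + (R(sⱼ,aⱼ) − rⱼ)²/Vmax²)`. -/
noncomputable def edLoss {S A : Type*} {n : ℕ} (P : S × A → S → ℝ) (R : S × A → ℝ)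
    (Vmax : ℝ) (data : Fin n → S × A × ℝ × S) : ℝ :=
  ∑ j : Fin n,
    (-Real.log (P ((data j).1, (data j).2.1) (data j).2.2.2)
      + (R ((data j).1, (data j).2.1) - (data j).2.2.1) ^ 2 / Vmax ^ 2)

open Real

open scoped ENNReal

lemma iUnion_preimage_singleton_eq_univ {α β : Type*} (f : α → β) :
    ⋃ b, f ⁻¹' {b} = Set.univ := by
  ext; simp

section Fibers

variable {Ω K : Type*} [MeasurableSpace Ω] {ν : Measure Ω}

lemma nullMeasurableSet_of_measure_add_measure_compl_le [IsFiniteMeasure ν] {s : Set Ω}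
    (h : ν s + ν sᶜ ≤ ν Set.univ) : NullMeasurableSet s ν := by
  set H := toMeasurable ν s
  have hH : MeasurableSet H := measurableSet_toMeasurable ν s
  have hsH : s ⊆ H := subset_toMeasurable ν s
  have hnull : ν (H \ s) = 0 := by
    have hcompl : ν sᶜ = ν (H \ s) + ν Hᶜ := by
      rw [← measure_inter_add_sdiff sᶜ hH, Set.sdiff_eq,
        Set.inter_eq_right.2 (Set.compl_subset_compl.2 hsH), Set.sdiff_eq, Set.inter_comm]
    rw [hcompl, ← measure_toMeasurable s, add_left_comm, measure_add_measure_compl hH] at h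
    simpa using (ENNReal.add_le_add_iff_right (measure_ne_top ν Set.univ)).1
      (h.trans_eq (zero_add _).symm)
  exact hH.nullMeasurableSet.congr
    (ae_eq_set.2 ⟨hnull, by rw [Set.sdiff_eq_empty.2 hsH, measure_empty]⟩)

lemma nullMeasurableSet_fiber_of_sum_le [Fintype K] [IsFiniteMeasure ν] (κ : Ω → K)
    (h : ∑ k, ν (κ ⁻¹' {k}) ≤ ν Set.univ) (k : K) : NullMeasurableSet (κ ⁻¹' {k}) ν := by
  classical
  refine nullMeasurableSet_of_measure_add_measure_compl_le (le_trans ?_ h)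
  have hcompl : (κ ⁻¹' {k})ᶜ = ⋃ l ∈ univ.erase k, κ ⁻¹' {l} := by
    ext p; simp [eq_comm]
  rw [← add_sum_erase _ _ (mem_univ k), hcompl]
  gcongr
  exact measure_biUnion_finset_le _ _

variable {κ : Ω → K}

lemma aemeasurable_comp_of_nullMeasurableSet_fiber [Countable K] {β : Type*} [MeasurableSpace β]
    {φ : K → Ω → β} (hκ : ∀ k, NullMeasurableSet (κ ⁻¹' {k}) ν)
    (hφ : ∀ k, AEMeasurable (φ k) ν) : AEMeasurable (fun p => φ (κ p) p) ν := by
  rw [← Measure.restrict_univ (μ := ν), ← iUnion_preimage_singleton_eq_univ κ,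
    aemeasurable_iUnion_iff]
  intro k
  refine (hφ k).restrict.congr ?_
  filter_upwards [ae_restrict_mem₀ (hκ k)] with p hp
  rw [Set.mem_singleton_iff.1 hp]

lemma lintegral_comp_eq_sum_setLIntegral_fiber [Fintype K]
    (hκ : ∀ k, NullMeasurableSet (κ ⁻¹' {k}) ν) (φ : K → Ω → ℝ≥0∞) :
    ∫⁻ p, φ (κ p) p ∂ν = ∑ k, ∫⁻ p in κ ⁻¹' {k}, φ k p ∂ν := by
  rw [← setLIntegral_univ, ← iUnion_preimage_singleton_eq_univ κ,
    lintegral_iUnion₀ hκ (fun _ _ h => (pairwise_disjoint_fiber κ h).aedisjoint), tsum_fintype]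
  refine sum_congr rfl fun k _ => lintegral_congr_ae ?_
  filter_upwards [ae_restrict_mem₀ (hκ k)] with p hp
  rw [Set.mem_singleton_iff.1 hp]

lemma measure_preimage_eq_sum_fiber (hκ : ∀ k, NullMeasurableSet (κ ⁻¹' {k}) ν)
    (s : Finset K) : ν (κ ⁻¹' s) = ∑ k ∈ s, ν (κ ⁻¹' {k}) := by
  rw [← Set.biUnion_preimage_singleton, Finset.set_biUnion_coe, measure_biUnion_finset₀
    (fun _ _ _ _ h => (pairwise_disjoint_fiber κ h).aedisjoint) fun k _ => hκ k]

end Fibers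

lemma exp_log_add_div_five_le {ρ : ℝ} (hρ : 0 < ρ) (Δ : ℝ) :
    exp ((log ρ + Δ) / 5) ≤ ρ / 5 + 4 / 5 * exp (Δ / 4) := by
  have h := convexOn_exp.2 (Set.mem_univ (log ρ)) (Set.mem_univ (Δ / 4))
    (by norm_num : (0 : ℝ) ≤ 1 / 5) (by norm_num : (0 : ℝ) ≤ 4 / 5) (by norm_num)
  simp only [smul_eq_mul, exp_log hρ] at h
  rw [show (log ρ + Δ) / 5 = 1 / 5 * log ρ + 4 / 5 * (Δ / 4) by ring]
  linarith

lemma exp_sq_sub_sq_div_four_le {a b r V : ℝ} (ha : a ∈ Set.Icc (0 : ℝ) 1)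
    (hb : b ∈ Set.Icc (0 : ℝ) 1) (hr : r ∈ Set.Icc (0 : ℝ) 1) (hV : 1 ≤ V) :
    exp (((a - r) ^ 2 - (b - r) ^ 2) / V ^ 2 / 4) ≤ 1 - (a - b) / (2 * V ^ 2) * (r - a) := by
  obtain ⟨ha0, ha1⟩ := ha
  obtain ⟨hb0, hb1⟩ := hb
  obtain ⟨hr0, hr1⟩ := hr
  have hW : 1 ≤ V ^ 2 := one_le_pow₀ hV
  set W := V ^ 2
  set d := a - b
  set e := a + b - 2 * r
  have hy : ((a - r) ^ 2 - (b - r) ^ 2) / W / 4 = d * e / (4 * W) := by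
    field_simp; ring
  have he : e ^ 2 ≤ 4 * W := by nlinarith
  have hy_sq : (d * e / (4 * W)) ^ 2 ≤ d ^ 2 / (4 * W) := by
    rw [div_pow, div_le_div_iff₀ (by positivity) (by positivity)]
    nlinarith [sq_nonneg d, mul_le_mul_of_nonneg_left he (sq_nonneg d)]
  have hy_abs : |d * e / (4 * W)| ≤ 1 := by
    rw [abs_le, le_div_iff₀ (by positivity), div_le_iff₀ (by positivity)]
    constructor <;> nlinarith
  have htaylor := (abs_le.1 (abs_exp_sub_one_sub_id_le hy_abs)).2
  -- the right-hand side is `1 + y + d² / (4W)` for the exponent `y`, and `y² ≤ d² / (4W)`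
  have hrhs : 1 - d / (2 * W) * (r - a) = 1 + d * e / (4 * W) + d ^ 2 / (4 * W) := by
    field_simp; ring
  rw [hy, hrhs]
  linarith

lemma lintegral_exp_sq_sub_sq_div_four_le {Ω : Type*} [MeasurableSpace Ω] {m : Measure Ω}
    [IsFiniteMeasure m] {X : Ω → ℝ} (hXm : AEMeasurable X m)
    (hX : ∀ᵐ ω ∂m, X ω ∈ Set.Icc (0 : ℝ) 1) {a b V : ℝ}
    (hmean : ∫ ω, X ω ∂m = m.real Set.univ * a)
    (ha : a ∈ Set.Icc (0 : ℝ) 1) (hb : b ∈ Set.Icc (0 : ℝ) 1) (hV : 1 ≤ V) :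
    ∫⁻ ω, ENNReal.ofReal (exp (((a - X ω) ^ 2 - (b - X ω) ^ 2) / V ^ 2 / 4)) ∂m
      ≤ m Set.univ := by
  set β := (a - b) / (2 * V ^ 2)
  have hbound : ∀ᵐ ω ∂m,
      exp (((a - X ω) ^ 2 - (b - X ω) ^ 2) / V ^ 2 / 4) ≤ 1 - β * (X ω - a) :=
    hX.mono fun ω hω => exp_sq_sub_sq_div_four_le ha hb hω hV
  have hXint : Integrable X m :=
    .of_bound hXm.aestronglyMeasurable 1 (hX.mono fun ω hω => by
      rw [Real.norm_eq_abs, abs_le]; constructor <;> linarith [hω.1, hω.2])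
  have haff_int : Integrable (fun ω => 1 - β * (X ω - a)) m :=
    (integrable_const 1).sub ((hXint.sub (integrable_const a)).const_mul β)
  have haff_nonneg : 0 ≤ᵐ[m] fun ω => 1 - β * (X ω - a) :=
    hbound.mono fun ω hω => (exp_pos _).le.trans hω
  calc ∫⁻ ω, ENNReal.ofReal (exp (((a - X ω) ^ 2 - (b - X ω) ^ 2) / V ^ 2 / 4)) ∂m
      ≤ ∫⁻ ω, ENNReal.ofReal (1 - β * (X ω - a)) ∂m :=
        lintegral_mono_ae (hbound.mono fun ω hω => ENNReal.ofReal_le_ofReal hω)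
    _ = ENNReal.ofReal (∫ ω, 1 - β * (X ω - a) ∂m) :=
        (ofReal_integral_eq_lintegral_ofReal haff_int haff_nonneg).symm
    _ = m Set.univ := by
        have haff : (fun ω => 1 - β * (X ω - a)) = fun ω => (1 + β * a) - β * X ω := by
          funext ω; ring
        rw [haff, integral_sub (integrable_const _) (hXint.const_mul β), integral_const,
          integral_const_mul, hmean, smul_eq_mul, ← ofReal_measureReal]
        ring_nf

section Product

variable {E : Type*} [MeasurableSpace E] {ν : Measure E} [IsProbabilityMeasure ν]

lemma lintegral_pi_prod_eq_pow {g : E → ℝ≥0∞} (hg : Measurable g) (n : ℕ) :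
    ∫⁻ x, ∏ j, g (x j) ∂Measure.pi (fun _ : Fin n => ν) = (∫⁻ y, g y ∂ν) ^ n := by
  rw [ProbabilityTheory.lintegral_prod_eq_prod_lintegral_of_indepFun _ _
    (ProbabilityTheory.iIndepFun_pi fun _ => hg.aemeasurable)
    fun j => hg.comp (measurable_pi_apply j)]
  simp_rw [(measurePreserving_eval (fun _ : Fin n => ν) _).lintegral_comp hg]
  simp

lemma measure_pi_lt_sum_le_exp_neg {f : E → ℝ} (hf : AEMeasurable f ν)
    (hexp : ∫⁻ y, ENNReal.ofReal (exp (f y)) ∂ν ≤ 1) (n : ℕ) (c : ℝ) :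
    Measure.pi (fun _ : Fin n => ν) {x | c < ∑ j, f (x j)} ≤ ENNReal.ofReal (exp (-c)) := by
  set g : E → ℝ≥0∞ := fun y => ENNReal.ofReal (exp (hf.mk f y))
  have hg : Measurable g := ENNReal.measurable_ofReal.comp (measurable_exp.comp hf.measurable_mk)
  have hcoord : ∀ᵐ x ∂Measure.pi (fun _ : Fin n => ν), ∀ j, f (x j) = hf.mk f (x j) :=
    ae_all_iff.2 fun j => Measure.tendsto_eval_ae_ae.eventually
      (p := fun y => f y = hf.mk f y) hf.ae_eq_mk
  have hsub : {x | c < ∑ j, f (x j)} ≤ᵐ[Measure.pi fun _ : Fin n => ν]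
      {x | ENNReal.ofReal (exp c) ≤ ∏ j, g (x j)} := by
    filter_upwards [hcoord] with x hx (hlt : c < ∑ j, f (x j))
    change ENNReal.ofReal (exp c) ≤ ∏ j, ENNReal.ofReal (exp (hf.mk f (x j)))
    simp_rw [hx] at hlt
    rw [← ENNReal.ofReal_prod_of_nonneg fun j _ => (exp_pos _).le, ← exp_sum]
    exact ENNReal.ofReal_le_ofReal (exp_le_exp.2 hlt.le)
  have hint : ∫⁻ y, g y ∂ν ≤ 1 :=
    (lintegral_congr_ae (hf.ae_eq_mk.mono fun y hy => by simp only [g, hy])).trans_le hexp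
  calc Measure.pi (fun _ : Fin n => ν) {x | c < ∑ j, f (x j)}
      ≤ Measure.pi (fun _ : Fin n => ν) {x | ENNReal.ofReal (exp c) ≤ ∏ j, g (x j)} :=
        measure_mono_ae hsub
    _ ≤ (∫⁻ x, ∏ j, g (x j) ∂Measure.pi fun _ : Fin n => ν) / ENNReal.ofReal (exp c) :=
        meas_ge_le_lintegral_div (Finset.measurable_prod _ fun j _ =>
          hg.comp (measurable_pi_apply j)).aemeasurable (by simp [exp_pos]) ENNReal.ofReal_ne_top
    _ ≤ 1 / ENNReal.ofReal (exp c) := by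
        rw [lintegral_pi_prod_eq_pow hg]
        gcongr
        exact pow_le_one₀ zero_le hint
    _ = ENNReal.ofReal (exp (-c)) := by
        rw [exp_neg, ENNReal.ofReal_inv_of_pos (exp_pos c), one_div]

end Product

lemma measure_iUnion_le_of_le_div {Ω ι : Type*} [MeasurableSpace Ω] {μ : Measure Ω} [Fintype ι]
    [Nonempty ι] {B : ι → Set Ω} {δ : ℝ}
    (hB : ∀ i, μ (B i) ≤ ENNReal.ofReal (δ / Fintype.card ι)) :
    μ (⋃ i, B i) ≤ ENNReal.ofReal δ :=
  calc μ (⋃ i, B i) ≤ ∑ i, μ (B i) := measure_iUnion_fintype_le μ B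
    _ ≤ ∑ _i : ι, ENNReal.ofReal (δ / Fintype.card ι) := sum_le_sum fun i _ => hB i
    _ = ENNReal.ofReal δ := by
      rw [sum_const, card_univ, nsmul_eq_mul, ← ENNReal.ofReal_natCast,
        ← ENNReal.ofReal_mul (Nat.cast_nonneg _), mul_div_cancel₀ _ (by positivity)]

lemma ofReal_one_sub_le_of_measure_compl_le {Ω : Type*} [MeasurableSpace Ω] {μ : Measure Ω}
    [IsProbabilityMeasure μ] {G : Set Ω} {δ : ℝ} (hδ : 0 ≤ δ) (hG : μ Gᶜ ≤ ENNReal.ofReal δ) :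
    ENNReal.ofReal (1 - δ) ≤ μ G := by
  rw [ENNReal.ofReal_sub _ hδ, ENNReal.ofReal_one, tsub_le_iff_right, ← measure_univ (μ := μ)]
  exact (measure_univ_le_add_compl G).trans (by gcongr)

lemma sum_weight_mul_kernel_eq_one {K X : Type*} [Fintype K] [Fintype X] {w : K → ℝ}
    {P : K → X → ℝ} (hw : ∑ q, w q = 1) (hP : ∀ q, ∑ x, P q x = 1) :
    ∑ k : K × X, w k.1 * P k.1 k.2 = 1 := by
  simp [Fintype.sum_prod_type, ← mul_sum, hP, hw]

lemma compl_setOf_sub_inf'_le_subset_iUnion {α ι : Type*} [Fintype ι] [Nonempty ι]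
    (g : α → ℝ) (f : ι → α → ℝ) (c : ℝ) :
    {x | g x - univ.inf' univ_nonempty (fun i => f i x) ≤ c}ᶜ ⊆ ⋃ i, {x | c < g x - f i x} := by
  intro x hx
  simp only [Set.mem_compl_iff, Set.mem_ofPred_eq, not_le] at hx
  obtain ⟨i, -, hi⟩ := (inf'_lt_iff _).1 (by linarith :
    univ.inf' univ_nonempty (fun i => f i x) < g x - c)
  exact Set.mem_iUnion.2 ⟨i, by simp only [Set.mem_ofPred_eq]; linarith⟩

section SampleLoss

variable {S A : Type*}

def stateAction (p : S × A × ℝ × S) : S × A := (p.1, p.2.1)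

def transitionKey (p : S × A × ℝ × S) : (S × A) × S := (stateAction p, p.2.2.2)

lemma preimage_stateAction_singleton (s : S) (a : A) :
    stateAction ⁻¹' {(s, a)} = {p : S × A × ℝ × S | p.1 = s ∧ p.2.1 = a} := by
  ext p; simp [stateAction, Prod.ext_iff]

lemma preimage_transitionKey_singleton (s : S) (a : A) (x : S) :
    transitionKey ⁻¹' {((s, a), x)}
      = {p : S × A × ℝ × S | p.1 = s ∧ p.2.1 = a ∧ p.2.2.2 = x} := by
  ext p; simp [transitionKey, stateAction, Prod.ext_iff, and_assoc]

noncomputable def sampleLoss (P : S × A → S → ℝ) (R : S × A → ℝ) (Vmax : ℝ)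
    (p : S × A × ℝ × S) : ℝ :=
  -log (P (stateAction p) p.2.2.2) + (R (stateAction p) - p.2.2.1) ^ 2 / Vmax ^ 2

lemma edLoss_eq_sum_sampleLoss {n : ℕ} (P : S × A → S → ℝ) (R : S × A → ℝ) (Vmax : ℝ)
    (data : Fin n → S × A × ℝ × S) : edLoss P R Vmax data = ∑ j, sampleLoss P R Vmax (data j) :=
  rfl

lemma sampleLoss_sub_sampleLoss {P Q : S × A → S → ℝ} (R R' : S × A → ℝ) (Vmax : ℝ)
    {p : S × A × ℝ × S} (hP : 0 < P (stateAction p) p.2.2.2)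
    (hQ : 0 < Q (stateAction p) p.2.2.2) :
    sampleLoss P R Vmax p - sampleLoss Q R' Vmax p
      = log (Q (stateAction p) p.2.2.2 / P (stateAction p) p.2.2.2)
        + ((R (stateAction p) - p.2.2.1) ^ 2 - (R' (stateAction p) - p.2.2.1) ^ 2) / Vmax ^ 2 := by
  rw [sampleLoss, sampleLoss, log_div hQ.ne' hP.ne']
  ring

variable [Fintype S]

structure IsModel (P : S × A → S → ℝ) (R : S × A → ℝ) : Prop where
  transition_pos : ∀ q x, 0 < P q x
  sum_transition : ∀ q, ∑ x, P q x = 1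
  reward_mem_Icc : ∀ q, R q ∈ Set.Icc (0 : ℝ) 1

variable [Fintype A] [MeasurableSpace S] [MeasurableSpace A]

/-- `ν` is the law of one tuple `(s, a, r, s')`: `(s, a)` has weights `μw`, `s' ∼ P (s, a)` and
`r ∈ [0, 1]` has conditional mean `R (s, a)`. -/
structure IsSampleLaw (ν : Measure (S × A × ℝ × S)) (μw : S × A → ℝ) (P : S × A → S → ℝ)
    (R : S × A → ℝ) : Prop where
  weight_nonneg : ∀ q, 0 ≤ μw q
  sum_weight : ∑ q, μw q = 1
  measure_transitionKey_fiber :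
    ∀ k, ν (transitionKey ⁻¹' {k}) = ENNReal.ofReal (μw k.1 * P k.1 k.2)
  reward_mem_Icc : ∀ᵐ p ∂ν, p.2.2.1 ∈ Set.Icc (0 : ℝ) 1
  setIntegral_reward : ∀ q, ∫ p in stateAction ⁻¹' {q}, p.2.2.1 ∂ν = μw q * R q

lemma aemeasurable_sampleLoss {ν : Measure (S × A × ℝ × S)}
    (hκ : ∀ k, NullMeasurableSet (transitionKey ⁻¹' {k}) ν)
    (P : S × A → S → ℝ) (R : S × A → ℝ) (Vmax : ℝ) : AEMeasurable (sampleLoss P R Vmax) ν :=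
  aemeasurable_comp_of_nullMeasurableSet_fiber (κ := transitionKey)
    (φ := fun k p => -log (P k.1 k.2) + (R k.1 - p.2.2.1) ^ 2 / Vmax ^ 2) hκ
    fun _ => by fun_prop

variable {ν : Measure (S × A × ℝ × S)} [IsProbabilityMeasure ν] {μw : S × A → ℝ}
  {Pstar P : S × A → S → ℝ} {Rstar R : S × A → ℝ} {Vmax : ℝ}

lemma IsSampleLaw.nullMeasurableSet_transitionKey_fiber (hν : IsSampleLaw ν μw Pstar Rstar)
    (hstar : IsModel Pstar Rstar) (k : (S × A) × S) :
    NullMeasurableSet (transitionKey ⁻¹' {k}) ν := by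
  refine nullMeasurableSet_fiber_of_sum_le _ (le_of_eq ?_) k
  rw [measure_univ, Finset.sum_congr rfl fun k _ => hν.measure_transitionKey_fiber k,
    ← ENNReal.ofReal_sum_of_nonneg fun k _ =>
      mul_nonneg (hν.weight_nonneg _) (hstar.transition_pos _ _).le,
    sum_weight_mul_kernel_eq_one hν.sum_weight hstar.sum_transition, ENNReal.ofReal_one]

lemma IsSampleLaw.measure_stateAction_fiber (hν : IsSampleLaw ν μw Pstar Rstar)
    (hstar : IsModel Pstar Rstar) (q : S × A) :
    ν (stateAction ⁻¹' {q}) = ENNReal.ofReal (μw q) := by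
  have hfiber : stateAction ⁻¹' {q}
      = transitionKey ⁻¹' ↑(({q} : Finset (S × A)) ×ˢ (univ : Finset S)) := by
    ext p; simp [transitionKey, eq_comm]
  rw [hfiber, measure_preimage_eq_sum_fiber (hν.nullMeasurableSet_transitionKey_fiber hstar),
    sum_product, sum_singleton, Finset.sum_congr rfl fun x _ => hν.measure_transitionKey_fiber _,
    ← ENNReal.ofReal_sum_of_nonneg fun x _ =>
      mul_nonneg (hν.weight_nonneg q) (hstar.transition_pos _ _).le,
    ← mul_sum, hstar.sum_transition, mul_one]

lemma IsSampleLaw.nullMeasurableSet_stateAction_fiber (hν : IsSampleLaw ν μw Pstar Rstar)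
    (hstar : IsModel Pstar Rstar) (q : S × A) :
    NullMeasurableSet (stateAction ⁻¹' {q}) ν := by
  refine nullMeasurableSet_fiber_of_sum_le _ (le_of_eq ?_) q
  rw [Finset.sum_congr rfl fun q _ => hν.measure_stateAction_fiber hstar q,
    ← ENNReal.ofReal_sum_of_nonneg fun q _ => hν.weight_nonneg q, hν.sum_weight,
    ENNReal.ofReal_one, measure_univ]

lemma IsSampleLaw.lintegral_transition_ratio_eq_one (hν : IsSampleLaw ν μw Pstar Rstar)
    (hstar : IsModel Pstar Rstar) (hP0 : ∀ q x, 0 ≤ P q x) (hP1 : ∀ q, ∑ x, P q x = 1) :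
    ∫⁻ p, ENNReal.ofReal (P (stateAction p) p.2.2.2 / Pstar (stateAction p) p.2.2.2) ∂ν = 1 := by
  have hterm : ∀ k, ENNReal.ofReal (P k.1 k.2 / Pstar k.1 k.2) * ν (transitionKey ⁻¹' {k})
      = ENNReal.ofReal (μw k.1 * P k.1 k.2) := fun k => by
    have hPstar := hstar.transition_pos k.1 k.2
    rw [hν.measure_transitionKey_fiber, ← ENNReal.ofReal_mul (div_nonneg (hP0 _ _) hPstar.le)]
    congr 1
    field_simp
  refine (lintegral_comp_eq_sum_setLIntegral_fiber (hν.nullMeasurableSet_transitionKey_fiber hstar)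
    fun k _ => ENNReal.ofReal (P k.1 k.2 / Pstar k.1 k.2)).trans ?_
  simp only [setLIntegral_const, hterm]
  rw [← ENNReal.ofReal_sum_of_nonneg fun k _ => mul_nonneg (hν.weight_nonneg _) (hP0 _ _),
    sum_weight_mul_kernel_eq_one hν.sum_weight hP1, ENNReal.ofReal_one]

lemma IsSampleLaw.lintegral_exp_reward_le_one (hν : IsSampleLaw ν μw Pstar Rstar)
    (hstar : IsModel Pstar Rstar) (hR : ∀ q, R q ∈ Set.Icc (0 : ℝ) 1) (hV : 1 ≤ Vmax) :
    ∫⁻ p, ENNReal.ofReal (exp (((Rstar (stateAction p) - p.2.2.1) ^ 2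
      - (R (stateAction p) - p.2.2.1) ^ 2) / Vmax ^ 2 / 4)) ∂ν ≤ 1 := by
  have hκ := hν.nullMeasurableSet_stateAction_fiber hstar
  rw [lintegral_comp_eq_sum_setLIntegral_fiber hκ fun q p => ENNReal.ofReal
    (exp (((Rstar q - p.2.2.1) ^ 2 - (R q - p.2.2.1) ^ 2) / Vmax ^ 2 / 4))]
  calc _ ≤ ∑ q, ν (stateAction ⁻¹' {q}) := by
        refine sum_le_sum fun q _ => ?_
        have hmean : ∫ p in stateAction ⁻¹' {q}, p.2.2.1 ∂ν
            = (ν.restrict (stateAction ⁻¹' {q})).real Set.univ * Rstar q := by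
          rw [hν.setIntegral_reward, measureReal_restrict_apply_univ, measureReal_def,
            hν.measure_stateAction_fiber hstar, ENNReal.toReal_ofReal (hν.weight_nonneg q)]
        have := lintegral_exp_sq_sub_sq_div_four_le (X := fun p : S × A × ℝ × S => p.2.2.1)
          (measurable_fst.comp (measurable_snd.comp measurable_snd)).aemeasurable
          (ae_restrict_of_ae hν.reward_mem_Icc) hmean (hstar.reward_mem_Icc q) (hR q) hV
        rwa [Measure.restrict_apply_univ] at this
    _ = 1 := by
        rw [← measure_preimage_eq_sum_fiber hκ, coe_univ, Set.preimage_univ, measure_univ]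

lemma IsSampleLaw.lintegral_exp_sampleLoss_sub_div_five_le_one
    (hν : IsSampleLaw ν μw Pstar Rstar) (hstar : IsModel Pstar Rstar) (hM : IsModel P R)
    (hV : 1 ≤ Vmax) :
    ∫⁻ p, ENNReal.ofReal (exp ((sampleLoss Pstar Rstar Vmax p - sampleLoss P R Vmax p) / 5)) ∂ν
      ≤ 1 := by
  set ratio := fun p : S × A × ℝ × S =>
    ENNReal.ofReal (P (stateAction p) p.2.2.2 / Pstar (stateAction p) p.2.2.2)
  set reward := fun p : S × A × ℝ × S => ENNReal.ofReal (exp (((Rstar (stateAction p) - p.2.2.1) ^ 2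
    - (R (stateAction p) - p.2.2.1) ^ 2) / Vmax ^ 2 / 4))
  have hpoint : ∀ p,
      ENNReal.ofReal (exp ((sampleLoss Pstar Rstar Vmax p - sampleLoss P R Vmax p) / 5))
        ≤ ENNReal.ofReal (1 / 5) * ratio p + ENNReal.ofReal (4 / 5) * reward p := by
    intro p
    have hρ := div_pos (hM.transition_pos (stateAction p) p.2.2.2)
      (hstar.transition_pos (stateAction p) p.2.2.2)
    rw [sampleLoss_sub_sampleLoss _ _ _ (hstar.transition_pos _ _) (hM.transition_pos _ _),
      ← ENNReal.ofReal_mul (by norm_num), ← ENNReal.ofReal_mul (by norm_num),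
      ← ENNReal.ofReal_add (by positivity) (by positivity)]
    exact ENNReal.ofReal_le_ofReal ((exp_log_add_div_five_le hρ _).trans_eq (by ring))
  have hratio_meas : AEMeasurable ratio ν :=
    aemeasurable_comp_of_nullMeasurableSet_fiber (hν.nullMeasurableSet_transitionKey_fiber hstar)
      (φ := fun k _ => ENNReal.ofReal (P k.1 k.2 / Pstar k.1 k.2)) fun _ => aemeasurable_const
  calc _ ≤ ∫⁻ p, ENNReal.ofReal (1 / 5) * ratio p + ENNReal.ofReal (4 / 5) * reward p ∂ν :=
        lintegral_mono hpoint
    _ = ENNReal.ofReal (1 / 5) * ∫⁻ p, ratio p ∂ν + ENNReal.ofReal (4 / 5) * ∫⁻ p, reward p ∂ν := by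
        rw [lintegral_add_left' (hratio_meas.const_mul _),
          lintegral_const_mul' _ _ ENNReal.ofReal_ne_top,
          lintegral_const_mul' _ _ ENNReal.ofReal_ne_top]
    _ ≤ ENNReal.ofReal (1 / 5) * 1 + ENNReal.ofReal (4 / 5) * 1 := by
        rw [hν.lintegral_transition_ratio_eq_one hstar (fun q x => (hM.transition_pos q x).le)
          hM.sum_transition]
        gcongr
        exact hν.lintegral_exp_reward_le_one hstar hM.reward_mem_Icc hV
    _ = 1 := by
        rw [mul_one, mul_one, ← ENNReal.ofReal_add (by norm_num) (by norm_num)]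
        norm_num

lemma IsSampleLaw.measure_pi_edLoss_sub_gt_le (hν : IsSampleLaw ν μw Pstar Rstar)
    (hstar : IsModel Pstar Rstar) (hM : IsModel P R) (hV : 1 ≤ Vmax) (n : ℕ) (c : ℝ) :
    Measure.pi (fun _ : Fin n => ν)
        {data | 5 * c < edLoss Pstar Rstar Vmax data - edLoss P R Vmax data}
      ≤ ENNReal.ofReal (exp (-c)) := by
  have hκ := hν.nullMeasurableSet_transitionKey_fiber hstar
  convert measure_pi_lt_sum_le_exp_neg
    (((aemeasurable_sampleLoss hκ _ _ _).sub (aemeasurable_sampleLoss hκ _ _ _)).div_const 5)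
    (hν.lintegral_exp_sampleLoss_sub_div_five_le_one hstar hM hV) n c using 2
  ext data
  simp only [edLoss_eq_sum_sampleLoss, ← sum_sub_distrib, ← sum_div, Set.mem_ofPred_eq,
    Pi.sub_apply]
  constructor <;> intro h <;> linarith

end SampleLoss

/-- the true model nearly minimizes the model-fitting loss.
There is an absolute constant `c > 0` such that: the single-sample law `ν` on
`S × A × ℝ × S` draws `(s,a) ∼ μ` (weights `μw`), `s' ∼ P*(·|s,a)` (densities `Pstar`),
and a reward `r ∈ [0,1]` a.s. with conditional mean `E[r|s,a] = R*(s,a)`; the dataset of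
`n` tuples is i.i.d. (product measure).  For a finite class of everywhere positive
models `(PM i, RM i)` containing `M* = (P*, R*)` and `Vmax ≥ 1`, with probability at
least `1 − δ`:  `E_D(M*) − min_M E_D(M) ≤ c log(|M|/δ)`. -/
theorem true_model_nearly_minimizes_fitting_loss :
    ∃ c : ℝ, 0 < c ∧
      ∀ (S A : Type) [Fintype S] [Fintype A] [Nonempty S] [Nonempty A]
        [MeasurableSpace S] [MeasurableSpace A]
        (μw : S × A → ℝ), (∀ q, 0 ≤ μw q) → (∑ q : S × A, μw q = 1) →
      ∀ (Pstar : S × A → S → ℝ),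
        (∀ q x, 0 < Pstar q x) → (∀ q, ∑ x : S, Pstar q x = 1) →
      ∀ (Rstar : S × A → ℝ), (∀ q, Rstar q ∈ Set.Icc (0 : ℝ) 1) →
      ∀ (Vmax : ℝ), 1 ≤ Vmax →
      ∀ (ι : Type) [Fintype ι] [Nonempty ι]
        (PM : ι → S × A → S → ℝ) (RM : ι → S × A → ℝ),
        (∀ i q x, 0 < PM i q x) → (∀ i q, ∑ x : S, PM i q x = 1) →
        (∀ i q, RM i q ∈ Set.Icc (0 : ℝ) 1) →
        (∃ istar, PM istar = Pstar ∧ RM istar = Rstar) →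
      ∀ (n : ℕ)
        (ν : Measure (S × A × ℝ × S)) [IsProbabilityMeasure ν],
        (∀ (s : S) (a : A) (x : S),
          ν {p : S × A × ℝ × S | p.1 = s ∧ p.2.1 = a ∧ p.2.2.2 = x}
            = ENNReal.ofReal (μw (s, a) * Pstar (s, a) x)) →
        (∀ᵐ p ∂ν, p.2.2.1 ∈ Set.Icc (0 : ℝ) 1) →
        (∀ (s : S) (a : A),
          ∫ p in {p : S × A × ℝ × S | p.1 = s ∧ p.2.1 = a}, p.2.2.1 ∂ν
            = μw (s, a) * Rstar (s, a)) →
      ∀ (δ : ℝ), δ ∈ Set.Ioc (0 : ℝ) 1 →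
      ENNReal.ofReal (1 - δ) ≤
        (Measure.pi fun _ : Fin n => ν)
          {data | edLoss Pstar Rstar Vmax data
              - univ.inf' univ_nonempty (fun i => edLoss (PM i) (RM i) Vmax data)
              ≤ c * Real.log ((Fintype.card ι : ℝ) / δ)} := by
  refine ⟨5, by norm_num, ?_⟩
  intro S A _ _ _ _ _ _ μw hμw0 hμw1 Pstar hP0 hP1 Rstar hR Vmax hV ι _ _ PM RM hPM0 hPM1 hRM
    _ n ν _ hνjoint hνr hνR δ hδ
  have hstar : IsModel Pstar Rstar := ⟨hP0, hP1, hR⟩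
  have hν : IsSampleLaw ν μw Pstar Rstar :=
    ⟨hμw0, hμw1, fun ⟨⟨s, a⟩, x⟩ => by rw [preimage_transitionKey_singleton, hνjoint], hνr,
      fun ⟨s, a⟩ => by rw [preimage_stateAction_singleton, hνR]⟩
  set t := (Fintype.card ι : ℝ) / δ
  have hbad : ∀ i, Measure.pi (fun _ : Fin n => ν) {data | 5 * log t
      < edLoss Pstar Rstar Vmax data - edLoss (PM i) (RM i) Vmax data}
        ≤ ENNReal.ofReal (δ / Fintype.card ι) := fun i => by
    have h := hν.measure_pi_edLoss_sub_gt_le hstar ⟨hPM0 i, hPM1 i, hRM i⟩ hV n (log t)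
    rwa [exp_neg, exp_log (by positivity [hδ.1]), inv_div] at h
  exact ofReal_one_sub_le_of_measure_compl_le hδ.1.le <| (measure_mono <|
    compl_setOf_sub_inf'_le_subset_iUnion (fun data => edLoss Pstar Rstar Vmax data)
      (fun i data => edLoss (PM i) (RM i) Vmax data) (5 * log t)).trans
    (measure_iUnion_le_of_le_div hbad)
end

section
/- Let M and M' be two finite discounted MDPs over the same finite state space S, finite action space A, discount γ ∈ [0,1), with transition kernels P_M, P_{M'} and reward functions R_M, R_{M'} : S×A → [0,1], and suppose the value functions of M' lie in [0, Vmax]. Then for any policy π and any initial state distribution d0: |J_M(π) − J_{M'}(π)| ≤ (Vmax/(1−γ)) · E_{(s,a)~d_M^π}[ TV(P_M(·|s,a), P_{M'}(·|s,a)) ] + (1/(1−γ)) · E_{(s,a)~d_M^π}[ |R_M(s,a) − R_{M'}(s,a)| ]. -/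
noncomputable section

open Finset

variable {S A : Type*}

/-- One-step forward update of a state–action distribution under kernel `P` and policy
`pol`: the next distribution at `(s', a')` is `(∑_{(s,a)} d (s,a) P(s'|s,a)) pol(a'|s')`. -/
def mdpStep [Fintype S] [Fintype A] (P : S × A → S → ℝ) (pol : S → A → ℝ)
    (d : S × A → ℝ) : S × A → ℝ :=
  fun q => (∑ p : S × A, d p * P p q.1) * pol q.1 q.2

/-- Distribution over state–action pairs at time `t`, starting from `d` at time `0` and
running policy `pol` in the MDP with kernel `P`. -/
def saDist [Fintype S] [Fintype A] (P : S × A → S → ℝ) (pol : S → A → ℝ)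
    (d : S × A → ℝ) : ℕ → S × A → ℝ
  | 0 => d
  | t + 1 => mdpStep P pol (saDist P pol d t)

/-- Expected discounted return `E[∑ₜ γᵗ R(sₜ,aₜ)]` starting from the state–action
distribution `d` at time `0`. -/
def JgenSA [Fintype S] [Fintype A] (P : S × A → S → ℝ) (R : S × A → ℝ)
    (pol : S → A → ℝ) (d : S × A → ℝ) (γ : ℝ) : ℝ :=
  ∑' t : ℕ, γ ^ t * ∑ q : S × A, saDist P pol d t q * R q

/-- Expected discounted return `J_M(π)` from the initial state distribution `d0`. -/
def Jret [Fintype S] [Fintype A] (P : S × A → S → ℝ) (R : S × A → ℝ)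
    (pol : S → A → ℝ) (d0 : S → ℝ) (γ : ℝ) : ℝ :=
  JgenSA P R pol (fun q => d0 q.1 * pol q.1 q.2) γ

/-- Discounted state–action occupancy
`d_M^π(s,a) = (1−γ) ∑ₜ γᵗ Pr(sₜ = s, aₜ = a)`. -/
def occSA [Fintype S] [Fintype A] (P : S × A → S → ℝ) (pol : S → A → ℝ)
    (d0 : S → ℝ) (γ : ℝ) : S × A → ℝ :=
  fun q => (1 - γ) * ∑' t : ℕ, γ ^ t * saDist P pol (fun q' => d0 q'.1 * pol q'.1 q'.2) t q

/-- Value function `V_M^π(s)`: the expected discounted return started from state `s`. -/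
def Vval [Fintype S] [Fintype A] [DecidableEq S] (P : S × A → S → ℝ) (R : S × A → ℝ)
    (pol : S → A → ℝ) (γ : ℝ) (s : S) : ℝ :=
  Jret P R pol (fun s' => if s' = s then 1 else 0) γ

/-- Total variation distance between two finitely supported distributions,
`TV(p,q) = (1/2) ∑ₓ |p x − q x|`. -/
def tvDist [Fintype S] (p q : S → ℝ) : ℝ := (1 / 2) * ∑ x : S, |p x - q x|


/-!
Let `dₜ` be the state–action distribution of `π` in `M` at time `t`, and `W d` the return in `M'`
when the state–action pair at time `0` is drawn from `d`. Since `W` is linear in `d`, `W` after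
one step of `M` from `d` is `E_d[P V']`, with `V'` the value function of `M'`, while the Bellman
equation of `M'` gives `W d = E_d[R' + γ P' V']`. Hence
`γᵗ E_{dₜ}[R] + γᵗ⁺¹ W dₜ₊₁ - γᵗ W dₜ = γᵗ E_{dₜ}[R - R' + γ (P - P') V']`, and summing this
telescoping series gives `J_M(π) - J_{M'}(π) = (1 - γ)⁻¹ E_{d_M^π}[R - R' + γ (P - P') V']`.
As `P(·|s,a)` and `P'(·|s,a)` have the same mass, `(P - P') V' = (P - P') (V' - Vmax / 2)`,
which is at most `Vmax · TV(P(·|s,a), P'(·|s,a))` in absolute value.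
-/

open Finset

structure IsStochastic {α β : Type*} [Fintype β] (K : α → β → ℝ) : Prop where
  nonneg : ∀ a b, 0 ≤ K a b
  sum_eq_one : ∀ a, ∑ b, K a b = 1

lemma norm_pow_mul_le {γ C : ℝ} (hγ0 : 0 ≤ γ) {x : ℕ → ℝ} (hx : ∀ t, |x t| ≤ C) (t : ℕ) :
    ‖γ ^ t * x t‖ ≤ C * γ ^ t := by
  rw [Real.norm_eq_abs, abs_mul, abs_pow, abs_of_nonneg hγ0, mul_comm C]
  exact mul_le_mul_of_nonneg_left (hx t) (pow_nonneg hγ0 t)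

lemma summable_pow_mul {γ C : ℝ} (hγ0 : 0 ≤ γ) (hγ1 : γ < 1) {x : ℕ → ℝ}
    (hx : ∀ t, |x t| ≤ C) : Summable fun t => γ ^ t * x t :=
  .of_norm_bounded ((summable_geometric_of_lt_one hγ0 hγ1).mul_left C) (norm_pow_mul_le hγ0 hx)

lemma abs_tsum_pow_mul_le {γ C : ℝ} (hγ0 : 0 ≤ γ) (hγ1 : γ < 1) {x : ℕ → ℝ}
    (hx : ∀ t, |x t| ≤ C) : |∑' t, γ ^ t * x t| ≤ C * (1 - γ)⁻¹ :=
  tsum_of_norm_bounded ((hasSum_geometric_of_lt_one hγ0 hγ1).mul_left C) (norm_pow_mul_le hγ0 hx)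

lemma abs_sum_mul_le_sum_abs_mul_norm {ι : Type*} [Fintype ι] (x f : ι → ℝ) :
    |∑ i, x i * f i| ≤ (∑ i, |x i|) * ‖f‖ := by
  rw [sum_mul]
  refine (abs_sum_le_sum_abs _ _).trans (sum_le_sum fun i _ => ?_)
  rw [abs_mul]
  exact mul_le_mul_of_nonneg_left (norm_le_pi_norm f i) (abs_nonneg _)

lemma abs_sum_sub_mul_le_tvDist [Fintype S] {p q V : S → ℝ} {Vmax : ℝ}
    (hpq : ∑ x, p x = ∑ x, q x) (hV : ∀ x, V x ∈ Set.Icc 0 Vmax) :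
    |∑ x, (p x - q x) * V x| ≤ Vmax * tvDist p q := by
  have hcenter : ∑ x, (p x - q x) * V x = ∑ x, (p x - q x) * (V x - Vmax / 2) := calc
    _ = ∑ x, (p x - q x) * (V x - Vmax / 2) + (∑ x, (p x - q x)) * (Vmax / 2) := by
        rw [sum_mul, ← sum_add_distrib]
        exact sum_congr rfl fun x _ => by ring
    _ = _ := by rw [sum_sub_distrib, hpq, sub_self, zero_mul, add_zero]
  rw [hcenter, tvDist]
  calc |∑ x, (p x - q x) * (V x - Vmax / 2)| ≤ ∑ x, |p x - q x| * (Vmax / 2) := by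
        refine (abs_sum_le_sum_abs _ _).trans (sum_le_sum fun x _ => ?_)
        rw [abs_mul]
        exact mul_le_mul_of_nonneg_left
          (abs_sub_le_iff.2 ⟨by linarith [(hV x).2], by linarith [(hV x).1]⟩) (abs_nonneg _)
    _ = Vmax * (1 / 2 * ∑ x, |p x - q x|) := by rw [← sum_mul]; ring

section

variable [Fintype S] [Fintype A] {P P' : S × A → S → ℝ} {pol : S → A → ℝ} {γ : ℝ}

def mdpStepLinearMap (P : S × A → S → ℝ) (pol : S → A → ℝ) :
    (S × A → ℝ) →ₗ[ℝ] S × A → ℝ where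
  toFun := mdpStep P pol
  map_add' d e := by
    ext q
    simp only [mdpStep, Pi.add_apply, add_mul, sum_add_distrib]
  map_smul' c d := by
    ext q
    simp only [mdpStep, Pi.smul_apply, smul_eq_mul, RingHom.id_apply, mul_assoc, ← mul_sum]

lemma saDist_eq_pow_apply (P : S × A → S → ℝ) (pol : S → A → ℝ) (d : S × A → ℝ) :
    ∀ t, saDist P pol d t = (mdpStepLinearMap P pol ^ t) d
  | 0 => rfl
  | t + 1 => by
    rw [pow_succ', Module.End.mul_apply, ← saDist_eq_pow_apply P pol d t]
    rfl

lemma saDist_succ' (P : S × A → S → ℝ) (pol : S → A → ℝ) (d : S × A → ℝ) (t : ℕ) :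
    saDist P pol d (t + 1) = saDist P pol (mdpStep P pol d) t := by
  rw [saDist_eq_pow_apply, saDist_eq_pow_apply, pow_succ, Module.End.mul_apply]
  rfl

lemma saDist_sum_smul {ι : Type*} (s : Finset ι) (c : ι → ℝ) (d : ι → S × A → ℝ) (t : ℕ) :
    saDist P pol (∑ i ∈ s, c i • d i) t = ∑ i ∈ s, c i • saDist P pol (d i) t := by
  simp only [saDist_eq_pow_apply, map_sum, map_smul]

lemma mdpStep_nonneg (hP : IsStochastic P) (hpol : IsStochastic pol) {d : S × A → ℝ}
    (hd : ∀ q, 0 ≤ d q) (q : S × A) : 0 ≤ mdpStep P pol d q :=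
  mul_nonneg (sum_nonneg fun p _ => mul_nonneg (hd p) (hP.nonneg p q.1)) (hpol.nonneg q.1 q.2)

lemma saDist_nonneg (hP : IsStochastic P) (hpol : IsStochastic pol) {d : S × A → ℝ}
    (hd : ∀ q, 0 ≤ d q) : ∀ t q, 0 ≤ saDist P pol d t q
  | 0 => hd
  | t + 1 => mdpStep_nonneg hP hpol (saDist_nonneg hP hpol hd t)

lemma sum_mdpStep (hP : IsStochastic P) (hpol : IsStochastic pol) (d : S × A → ℝ) :
    ∑ q, mdpStep P pol d q = ∑ p, d p := calc
  _ = ∑ s, (∑ p, d p * P p s) * ∑ a, pol s a := by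
      rw [Fintype.sum_prod_type]
      simp only [mdpStep, mul_sum]
  _ = ∑ p, d p * ∑ s, P p s := by
      simp only [hpol.sum_eq_one, mul_one, mul_sum]
      exact sum_comm
  _ = ∑ p, d p := by simp only [hP.sum_eq_one, mul_one]

lemma abs_mdpStep_le (hP : IsStochastic P) (hpol : IsStochastic pol) (d : S × A → ℝ)
    (q : S × A) : |mdpStep P pol d q| ≤ mdpStep P pol (fun p => |d p|) q := by
  rw [mdpStep, mdpStep, abs_mul, abs_of_nonneg (hpol.nonneg q.1 q.2)]
  refine mul_le_mul_of_nonneg_right ((abs_sum_le_sum_abs _ _).trans_eq ?_) (hpol.nonneg q.1 q.2)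
  simp only [abs_mul, abs_of_nonneg (hP.nonneg _ q.1)]

lemma sum_abs_saDist_le (hP : IsStochastic P) (hpol : IsStochastic pol) (d : S × A → ℝ) :
    ∀ t, ∑ q, |saDist P pol d t q| ≤ ∑ q, |d q|
  | 0 => le_rfl
  | t + 1 => calc
      ∑ q, |mdpStep P pol (saDist P pol d t) q|
          ≤ ∑ q, mdpStep P pol (fun p => |saDist P pol d t p|) q :=
        sum_le_sum fun q _ => abs_mdpStep_le hP hpol _ q
      _ = ∑ q, |saDist P pol d t q| := sum_mdpStep hP hpol _
      _ ≤ ∑ q, |d q| := sum_abs_saDist_le hP hpol d t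

lemma summable_saDist (hP : IsStochastic P) (hpol : IsStochastic pol) (hγ0 : 0 ≤ γ)
    (hγ1 : γ < 1) (d : S × A → ℝ) (q : S × A) :
    Summable fun t => γ ^ t * saDist P pol d t q :=
  summable_pow_mul hγ0 hγ1 fun t =>
    (single_le_sum (fun p _ => abs_nonneg (saDist P pol d t p)) (mem_univ q)).trans
      (sum_abs_saDist_le hP hpol d t)

lemma abs_sum_saDist_mul_le (hP : IsStochastic P) (hpol : IsStochastic pol)
    (R d : S × A → ℝ) (t : ℕ) :
    |∑ q, saDist P pol d t q * R q| ≤ (∑ q, |d q|) * ‖R‖ :=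
  (abs_sum_mul_le_sum_abs_mul_norm _ R).trans
    (mul_le_mul_of_nonneg_right (sum_abs_saDist_le hP hpol d t) (norm_nonneg R))

lemma summable_JgenSA (hP : IsStochastic P) (hpol : IsStochastic pol) (hγ0 : 0 ≤ γ)
    (hγ1 : γ < 1) (R d : S × A → ℝ) :
    Summable fun t => γ ^ t * ∑ q, saDist P pol d t q * R q :=
  summable_pow_mul hγ0 hγ1 (abs_sum_saDist_mul_le hP hpol R d)

lemma abs_JgenSA_le (hP : IsStochastic P) (hpol : IsStochastic pol) (hγ0 : 0 ≤ γ)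
    (hγ1 : γ < 1) (R d : S × A → ℝ) :
    |JgenSA P R pol d γ| ≤ (∑ q, |d q|) * ‖R‖ * (1 - γ)⁻¹ :=
  abs_tsum_pow_mul_le hγ0 hγ1 (abs_sum_saDist_mul_le hP hpol R d)

lemma JgenSA_eq_sum_tsum_mul (hP : IsStochastic P) (hpol : IsStochastic pol) (hγ0 : 0 ≤ γ)
    (hγ1 : γ < 1) (R d : S × A → ℝ) :
    JgenSA P R pol d γ = ∑ q, (∑' t, γ ^ t * saDist P pol d t q) * R q := by
  simp only [JgenSA, mul_sum, ← mul_assoc, ← tsum_mul_right]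
  exact Summable.tsum_finsetSum fun q _ => (summable_saDist hP hpol hγ0 hγ1 d q).mul_right (R q)

lemma JgenSA_eq_add_JgenSA_mdpStep (hP : IsStochastic P) (hpol : IsStochastic pol) (hγ0 : 0 ≤ γ)
    (hγ1 : γ < 1) (R d : S × A → ℝ) :
    JgenSA P R pol d γ = ∑ q, d q * R q + γ * JgenSA P R pol (mdpStep P pol d) γ := by
  rw [JgenSA, (summable_JgenSA hP hpol hγ0 hγ1 R d).tsum_eq_zero_add, JgenSA, ← tsum_mul_left]
  congr 1
  · rw [pow_zero, one_mul]
    rfl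
  · exact tsum_congr fun t => by rw [saDist_succ', pow_succ]; ring

lemma JgenSA_sum_smul (hP : IsStochastic P) (hpol : IsStochastic pol) (hγ0 : 0 ≤ γ)
    (hγ1 : γ < 1) (R : S × A → ℝ) {ι : Type*} (s : Finset ι) (c : ι → ℝ)
    (d : ι → S × A → ℝ) :
    JgenSA P R pol (∑ i ∈ s, c i • d i) γ = ∑ i ∈ s, c i * JgenSA P R pol (d i) γ := by
  simp only [JgenSA, ← tsum_mul_left]
  rw [← Summable.tsum_finsetSum fun i _ => (summable_JgenSA hP hpol hγ0 hγ1 R (d i)).mul_left (c i)]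
  refine tsum_congr fun t => ?_
  simp only [saDist_sum_smul, Finset.sum_apply, Pi.smul_apply, smul_eq_mul, sum_mul, mul_sum]
  rw [sum_comm]
  simp only [mul_left_comm, mul_assoc]

lemma Jret_eq_sum_mul_Vval [DecidableEq S] (hP : IsStochastic P) (hpol : IsStochastic pol)
    (hγ0 : 0 ≤ γ) (hγ1 : γ < 1) (R : S × A → ℝ) (μ : S → ℝ) :
    Jret P R pol μ γ = ∑ s, μ s * Vval P R pol γ s := by
  have hμ : (fun q : S × A => μ q.1 * pol q.1 q.2)
      = ∑ s, μ s • fun q : S × A => (if q.1 = s then 1 else 0) * pol q.1 q.2 := by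
    ext q
    simp [Finset.sum_apply, ite_mul]
  rw [Jret, hμ, JgenSA_sum_smul hP hpol hγ0 hγ1]
  rfl

lemma JgenSA_mdpStep_eq_sum_mul_Vval [DecidableEq S] (hP' : IsStochastic P')
    (hpol : IsStochastic pol) (hγ0 : 0 ≤ γ) (hγ1 : γ < 1) (R' : S × A → ℝ)
    (P : S × A → S → ℝ) (d : S × A → ℝ) :
    JgenSA P' R' pol (mdpStep P pol d) γ = ∑ p, d p * ∑ s, P p s * Vval P' R' pol γ s := calc
  _ = Jret P' R' pol (fun s => ∑ p, d p * P p s) γ := rfl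
  _ = ∑ s, (∑ p, d p * P p s) * Vval P' R' pol γ s := Jret_eq_sum_mul_Vval hP' hpol hγ0 hγ1 R' _
  _ = _ := by
      simp only [sum_mul, mul_sum, mul_assoc]
      exact sum_comm

lemma sum_mul_bellman_residual_eq [DecidableEq S] (hP' : IsStochastic P') (hpol : IsStochastic pol)
    (hγ0 : 0 ≤ γ) (hγ1 : γ < 1) (P : S × A → S → ℝ) (R R' d : S × A → ℝ) :
    ∑ q, d q * (R q - R' q + γ * ∑ s, (P q s - P' q s) * Vval P' R' pol γ s)
      = ∑ q, d q * R q + γ * JgenSA P' R' pol (mdpStep P pol d) γ - JgenSA P' R' pol d γ := by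
  rw [JgenSA_eq_add_JgenSA_mdpStep hP' hpol hγ0 hγ1 R' d,
    JgenSA_mdpStep_eq_sum_mul_Vval hP' hpol hγ0 hγ1, JgenSA_mdpStep_eq_sum_mul_Vval hP' hpol hγ0 hγ1]
  simp only [sub_mul, sum_sub_distrib, mul_add, mul_sub, sum_add_distrib, mul_sum,
    mul_left_comm _ γ]
  ring

lemma JgenSA_sub_JgenSA [DecidableEq S] (hP : IsStochastic P) (hP' : IsStochastic P')
    (hpol : IsStochastic pol) (hγ0 : 0 ≤ γ) (hγ1 : γ < 1) (R R' d : S × A → ℝ) :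
    JgenSA P R pol d γ - JgenSA P' R' pol d γ
      = JgenSA P (fun q => R q - R' q + γ * ∑ s, (P q s - P' q s) * Vval P' R' pol γ s)
          pol d γ := by
  set w : ℕ → ℝ := fun t => γ ^ t * JgenSA P' R' pol (saDist P pol d t) γ
  have hw : Summable w := summable_pow_mul hγ0 hγ1 fun t =>
    (abs_JgenSA_le hP' hpol hγ0 hγ1 R' _).trans <|
      mul_le_mul_of_nonneg_right
        (mul_le_mul_of_nonneg_right (sum_abs_saDist_le hP hpol d t) (norm_nonneg R'))
        (inv_nonneg.2 (sub_nonneg.2 hγ1.le))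
  have htelescope : ∀ t,
      γ ^ t * ∑ q, saDist P pol d t q
          * (R q - R' q + γ * ∑ s, (P q s - P' q s) * Vval P' R' pol γ s)
        = γ ^ t * ∑ q, saDist P pol d t q * R q + (w (t + 1) - w t) := fun t => by
    rw [sum_mul_bellman_residual_eq hP' hpol hγ0 hγ1]
    simp only [w, pow_succ, saDist]
    ring
  have hw' : Summable fun t => w (t + 1) := (summable_nat_add_iff 1).2 hw
  calc JgenSA P R pol d γ - JgenSA P' R' pol d γ
      = JgenSA P R pol d γ + ∑' t, (w (t + 1) - w t) := by
        rw [hw'.tsum_sub hw, hw.tsum_eq_zero_add]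
        simp only [w, pow_zero, one_mul, saDist]
        ring
    _ = _ := by
        rw [JgenSA, ← (summable_JgenSA hP hpol hγ0 hγ1 R d).tsum_add (hw'.sub hw), JgenSA]
        exact tsum_congr fun t => (htelescope t).symm

lemma occSA_nonneg (hP : IsStochastic P) (hpol : IsStochastic pol) (hγ0 : 0 ≤ γ) (hγ1 : γ ≤ 1)
    {d0 : S → ℝ} (hd0 : ∀ s, 0 ≤ d0 s) (q : S × A) : 0 ≤ occSA P pol d0 γ q :=
  mul_nonneg (sub_nonneg.2 hγ1) <| tsum_nonneg fun t => mul_nonneg (pow_nonneg hγ0 t) <|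
    saDist_nonneg hP hpol (fun p => mul_nonneg (hd0 p.1) (hpol.nonneg p.1 p.2)) t q

lemma Jret_eq_inv_mul_sum_occSA_mul (hP : IsStochastic P) (hpol : IsStochastic pol)
    (hγ0 : 0 ≤ γ) (hγ1 : γ < 1) (f : S × A → ℝ) (d0 : S → ℝ) :
    Jret P f pol d0 γ = (1 - γ)⁻¹ * ∑ q, occSA P pol d0 γ q * f q := by
  rw [Jret, JgenSA_eq_sum_tsum_mul hP hpol hγ0 hγ1]
  simp only [occSA, mul_assoc, ← mul_sum]
  rw [inv_mul_cancel_left₀ (sub_ne_zero.2 hγ1.ne')]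

end

theorem simulation_lemma_general [Fintype S] [Fintype A] [DecidableEq S]
    (γ : ℝ) (hγ : γ ∈ Set.Ico (0 : ℝ) 1)
    (P P' : S × A → S → ℝ)
    (hP0 : ∀ q x, 0 ≤ P q x) (hP1 : ∀ q, ∑ x : S, P q x = 1)
    (hP'0 : ∀ q x, 0 ≤ P' q x) (hP'1 : ∀ q, ∑ x : S, P' q x = 1)
    (R R' : S × A → ℝ)
    (pol : S → A → ℝ) (hpol0 : ∀ s a, 0 ≤ pol s a) (hpol1 : ∀ s, ∑ a : A, pol s a = 1)
    (d0 : S → ℝ) (hd00 : ∀ s, 0 ≤ d0 s)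
    (Vmax : ℝ) (hV : ∀ s, Vval P' R' pol γ s ∈ Set.Icc (0 : ℝ) Vmax) :
    |Jret P R pol d0 γ - Jret P' R' pol d0 γ| ≤
      Vmax / (1 - γ) * ∑ q : S × A, occSA P pol d0 γ q * tvDist (P q) (P' q)
        + 1 / (1 - γ) * ∑ q : S × A, occSA P pol d0 γ q * |R q - R' q| := by
  obtain ⟨hγ0, hγ1⟩ := hγ
  have hP : IsStochastic P := ⟨hP0, hP1⟩
  have hP' : IsStochastic P' := ⟨hP'0, hP'1⟩
  have hpol : IsStochastic pol := ⟨hpol0, hpol1⟩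
  set V := Vval P' R' pol γ
  have hocc := occSA_nonneg hP hpol hγ0 hγ1.le hd00
  have hκ : 0 < (1 - γ)⁻¹ := inv_pos.2 (sub_pos.2 hγ1)
  have hresidual : ∀ q, |R q - R' q + γ * ∑ s, (P q s - P' q s) * V s|
      ≤ Vmax * tvDist (P q) (P' q) + |R q - R' q| := fun q => by
    have hPV := abs_sum_sub_mul_le_tvDist ((hP1 q).trans (hP'1 q).symm) hV
    rw [add_comm (Vmax * _)]
    refine (abs_add_le _ _).trans (add_le_add_right ?_ _)
    rw [abs_mul, abs_of_nonneg hγ0]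
    nlinarith [abs_nonneg (∑ s, (P q s - P' q s) * V s)]
  calc |Jret P R pol d0 γ - Jret P' R' pol d0 γ|
      = (1 - γ)⁻¹ * |∑ q, occSA P pol d0 γ q * (R q - R' q + γ * ∑ s, (P q s - P' q s) * V s)| := by
        rw [Jret, Jret, JgenSA_sub_JgenSA hP hP' hpol hγ0 hγ1, ← Jret,
          Jret_eq_inv_mul_sum_occSA_mul hP hpol hγ0 hγ1, abs_mul, abs_of_pos hκ]
    _ ≤ (1 - γ)⁻¹ * ∑ q, occSA P pol d0 γ q * (Vmax * tvDist (P q) (P' q) + |R q - R' q|) := by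
        refine mul_le_mul_of_nonneg_left ?_ hκ.le
        refine (abs_sum_le_sum_abs _ _).trans (sum_le_sum fun q _ => ?_)
        rw [abs_mul, abs_of_nonneg (hocc q)]
        exact mul_le_mul_of_nonneg_left (hresidual q) (hocc q)
    _ = _ := by
        simp only [mul_add, sum_add_distrib, mul_left_comm _ Vmax, ← mul_sum]
        ring

/-- simulation lemma.
For two MDPs `M = (P, R)` and `M' = (P', R')` on the same finite state/action spaces with
discount `γ ∈ [0,1)`, rewards in `[0,1]`, and the value functions of `M'` lying in
`[0, Vmax]`, for any policy `pol` and initial distribution `d0`: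
`|J_M(π) − J_{M'}(π)| ≤ (Vmax/(1−γ)) E_{(s,a)∼d_M^π}[TV(P(·|s,a), P'(·|s,a))]
  + (1/(1−γ)) E_{(s,a)∼d_M^π}[|R(s,a) − R'(s,a)|]`. -/
theorem simulation_lemma [Fintype S] [Fintype A] [Nonempty S] [Nonempty A] [DecidableEq S]
    (γ : ℝ) (hγ : γ ∈ Set.Ico (0 : ℝ) 1)
    (P P' : S × A → S → ℝ)
    (hP0 : ∀ q x, 0 ≤ P q x) (hP1 : ∀ q, ∑ x : S, P q x = 1)
    (hP'0 : ∀ q x, 0 ≤ P' q x) (hP'1 : ∀ q, ∑ x : S, P' q x = 1)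
    (R R' : S × A → ℝ)
    (hR : ∀ q, R q ∈ Set.Icc (0 : ℝ) 1) (hR' : ∀ q, R' q ∈ Set.Icc (0 : ℝ) 1)
    (pol : S → A → ℝ) (hpol0 : ∀ s a, 0 ≤ pol s a) (hpol1 : ∀ s, ∑ a : A, pol s a = 1)
    (d0 : S → ℝ) (hd00 : ∀ s, 0 ≤ d0 s) (hd01 : ∑ s : S, d0 s = 1)
    (Vmax : ℝ) (hV : ∀ s, Vval P' R' pol γ s ∈ Set.Icc (0 : ℝ) Vmax) :
    |Jret P R pol d0 γ - Jret P' R' pol d0 γ| ≤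
      Vmax / (1 - γ) * ∑ q : S × A, occSA P pol d0 γ q * tvDist (P q) (P' q)
        + 1 / (1 - γ) * ∑ q : S × A, occSA P pol d0 γ q * |R q - R' q| :=
  simulation_lemma_general γ hγ P P' hP0 hP1 hP'0 hP'1 R R' pol hpol0 hpol1 d0 hd00 Vmax hV
end
end

section
/- Let Π be a finite nonempty set, M_α a finite nonempty set, and for each M ∈ M_α and π ∈ Π let J_M(π) ∈ ℝ be given. Let M ⊆ M_α be nonempty and ψ : M → ℝ. If π' attains the maximum of π ↦ min_{M ∈ M} ( J_M(π) + ψ(M) ) over Π, then π' is a fixed point of relative pessimism, i.e., π' attains the maximum of π ↦ min_{M ∈ M_α} ( J_M(π) − J_M(π') ) over Π. -/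
open Finset

/-- fixed-point lemma, forward direction.
`P` is the finite nonempty policy class Π, `Mα` is the finite nonempty version space,
`J m π` the return of policy `π` in model `m`.  Let `Mc ⊆ M_α` be nonempty and `ψ` a real
function on models.  If `π'` maximizes `π ↦ min_{m ∈ Mc} (J m π + ψ m)` over Π, then `π'`
is a fixed point of relative pessimism:
`π' ∈ argmax_{π ∈ Π} min_{m ∈ M_α} (J m π − J m π')`. -/
theorem fixed_point_of_regularized_maximin
    {P Mα : Type*} [Fintype P] [Fintype Mα] [Nonempty P] [Nonempty Mα]
    (J : Mα → P → ℝ) (Mc : Finset Mα) (hMc : Mc.Nonempty) (ψ : Mα → ℝ) (π' : P)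
    (hopt : ∀ π : P,
      Mc.inf' hMc (fun m => J m π + ψ m) ≤ Mc.inf' hMc (fun m => J m π' + ψ m)) :
    ∀ π : P,
      univ.inf' univ_nonempty (fun m => J m π - J m π')
        ≤ univ.inf' univ_nonempty (fun m => J m π' - J m π') := by
  intro π
  have hrhs : univ.inf' univ_nonempty (fun m : Mα => J m π' - J m π') = 0 := by
    have : ∀ m ∈ (univ : Finset Mα), J m π' - J m π' = 0 := by intro m _; ring
    rw [inf'_congr univ_nonempty rfl this]
    simp
  rw [hrhs]
  -- obtain m ∈ Mc attaining the inf for π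
  obtain ⟨m, hm, hmeq⟩ := Finset.exists_mem_eq_inf' hMc (fun m => J m π + ψ m)
  have h1 : J m π + ψ m ≤ J m π' + ψ m := by
    have := hopt π
    rw [hmeq] at this
    exact this.trans (Finset.inf'_le _ hm)
  have h2 : J m π - J m π' ≤ 0 := by linarith
  exact le_trans (Finset.inf'_le _ (mem_univ m)) h2
end

section
/- Let Π be a finite nonempty set, M_α a finite nonempty set, and for each M ∈ M_α and π ∈ Π let J_M(π) ∈ ℝ be given. Then: (a) any absolute-pessimism policy, i.e., any π' attaining the maximum of π ↦ min_{M ∈ M_α} J_M(π) over Π, is a fixed point of relative pessimism; and (b) for any reference policy πref ∈ Π, any relative-pessimism policy with respect to πref, i.e., any π' attaining the maximum of π ↦ min_{M ∈ M_α} ( J_M(π) − J_M(πref) ) over Π, is a fixed point of relative pessimism. -/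
open Finset

/-- A policy `π'` is a fixed point of relative pessimism if
`π' ∈ argmax_{π ∈ Π} min_{m ∈ M_α} (J m π − J m π')`. -/
def IsRelPessFixedPoint {P Mα : Type*} [Fintype P] [Fintype Mα] [Nonempty P] [Nonempty Mα]
    (J : Mα → P → ℝ) (π' : P) : Prop :=
  ∀ π : P,
    univ.inf' univ_nonempty (fun m => J m π - J m π')
      ≤ univ.inf' univ_nonempty (fun m => J m π' - J m π')

lemma inf'_sub_le {Mα : Type*} [Fintype Mα] [Nonempty Mα] (f g : Mα → ℝ) :
    univ.inf' univ_nonempty (fun m => f m - g m)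
      ≤ univ.inf' univ_nonempty f - univ.inf' univ_nonempty g := by
  obtain ⟨m, _, hm⟩ := exists_mem_eq_inf' (univ_nonempty) f
  calc univ.inf' univ_nonempty (fun m => f m - g m) ≤ f m - g m :=
        inf'_le _ (mem_univ m)
    _ ≤ univ.inf' univ_nonempty f - univ.inf' univ_nonempty g := by
        rw [← hm]; gcongr; exact inf'_le _ (mem_univ m)

/-- fixed-point examples, part 1.
(a) any absolute-pessimism policy, i.e. any maximizer of `π ↦ min_{m ∈ M_α} J m π`, is a
fixed point of relative pessimism; (b) for any reference policy `πref ∈ Π`, any maximizer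
of `π ↦ min_{m ∈ M_α} (J m π − J m πref)` is a fixed point of relative pessimism. -/
theorem absolute_and_relative_pessimism_are_fixed_points
    {P Mα : Type*} [Fintype P] [Fintype Mα] [Nonempty P] [Nonempty Mα]
    (J : Mα → P → ℝ) :
    (∀ π' : P,
      (∀ π : P, univ.inf' univ_nonempty (fun m => J m π)
          ≤ univ.inf' univ_nonempty (fun m => J m π')) →
      IsRelPessFixedPoint J π') ∧
    (∀ (piref : P) (π' : P),
      (∀ π : P, univ.inf' univ_nonempty (fun m => J m π - J m piref)
          ≤ univ.inf' univ_nonempty (fun m => J m π' - J m piref)) →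
      IsRelPessFixedPoint J π') := by
  constructor
  · intro π' h π
    have h1 := inf'_sub_le (fun m => J m π) (fun m => J m π')
    have h2 := h π
    have : univ.inf' univ_nonempty (fun m => J m π' - J m π') = 0 := by
      simp
    rw [this]
    linarith
  · intro piref π' h π
    have h1 := inf'_sub_le (fun m => J m π - J m piref) (fun m => J m π' - J m piref)
    have h2 := h π
    have h3 : (fun m => (J m π - J m piref) - (J m π' - J m piref))
        = fun m => J m π - J m π' := by funext m; ring
    rw [h3] at h1
    have : univ.inf' univ_nonempty (fun m => J m π' - J m π') = 0 := by
      simp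
    rw [this]
    linarith
end

section
/- Let Π be a finite nonempty set, M_α a finite nonempty set, and for each M ∈ M_α and π ∈ Π let J_M(π) ∈ ℝ be given. Then: (a) any regret-minimization policy, i.e., any π' attaining the maximum of π ↦ min_{M ∈ M_α} ( J_M(π) − max_{π'' ∈ Π} J_M(π'') ) over Π, is a fixed point of relative pessimism; and (b) for any single model M0 ∈ M_α, any π' attaining the maximum of J_{M0} over Π is a fixed point of relative pessimism; in particular, any π' for which there exists M0 ∈ M_α with (π', M0) attaining the maximum of J_M(π) over Π × M_α (the optimistic policy) is a fixed point of relative pessimism. -/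
open Finset

/-- fixed-point examples, part 2.
(a) any regret-minimization policy, i.e. any maximizer of
`π ↦ min_{m ∈ M_α} (J m π − max_{π'' ∈ Π} J m π'')`, is a fixed point of relative
pessimism; (b) for any single model `M0 ∈ M_α`, any maximizer of `J_{M0}` over Π is a
fixed point of relative pessimism; in particular, any `π'` for which there exists
`M0 ∈ M_α` with `(π', M0)` maximizing `J m π` over `Π × M_α` (the optimistic policy) is a
fixed point of relative pessimism. -/
theorem regret_and_single_model_optimal_are_fixed_points
    {P Mα : Type*} [Fintype P] [Fintype Mα] [Nonempty P] [Nonempty Mα]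
    (J : Mα → P → ℝ) :
    (∀ π' : P,
      (∀ π : P,
        univ.inf' univ_nonempty (fun m => J m π - univ.sup' univ_nonempty (J m))
          ≤ univ.inf' univ_nonempty (fun m => J m π' - univ.sup' univ_nonempty (J m))) →
      IsRelPessFixedPoint J π') ∧
    (∀ (M0 : Mα) (π' : P), (∀ π : P, J M0 π ≤ J M0 π') → IsRelPessFixedPoint J π') ∧
    (∀ π' : P,
      (∃ M0 : Mα, ∀ (π : P) (m : Mα), J m π ≤ J M0 π') → IsRelPessFixedPoint J π') := by

  have hb : ∀ (M0 : Mα) (π' : P), (∀ π : P, J M0 π ≤ J M0 π') → IsRelPessFixedPoint J π' := by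
    intro M0 π' h π
    have h1 : univ.inf' univ_nonempty (fun m => J m π - J m π') ≤ J M0 π - J M0 π' :=
      inf'_le _ (mem_univ M0)
    have h2 : (0:ℝ) ≤ univ.inf' univ_nonempty (fun m => J m π' - J m π') :=
      le_inf' _ _ (fun m _ => by simp)
    linarith [h π]
  refine ⟨?_, hb, fun π' ⟨M0, h⟩ => hb M0 π' (fun π => h π M0)⟩
  intro π' hreg π
  by_contra hc
  push_neg at hc
  have hrhs : univ.inf' univ_nonempty (fun m => J m π' - J m π') = 0 := by
    simp
  rw [hrhs] at hc
  have hall : ∀ m : Mα, J m π' < J m π := by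
    intro m
    have h1 : univ.inf' univ_nonempty (fun m => J m π - J m π') ≤ J m π - J m π' :=
      inf'_le _ (mem_univ m)
    linarith
  obtain ⟨m0, _, hm0eq⟩ := exists_mem_eq_inf' univ_nonempty
    (fun m => J m π - univ.sup' univ_nonempty (J m))
  have hlt : univ.inf' univ_nonempty (fun m => J m π' - univ.sup' univ_nonempty (J m))
      < univ.inf' univ_nonempty (fun m => J m π - univ.sup' univ_nonempty (J m)) := by
    calc univ.inf' univ_nonempty (fun m => J m π' - univ.sup' univ_nonempty (J m))
        ≤ J m0 π' - univ.sup' univ_nonempty (J m0) := inf'_le _ (mem_univ m0)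
      _ < J m0 π - univ.sup' univ_nonempty (J m0) := by linarith [hall m0]
      _ = univ.inf' univ_nonempty (fun m => J m π - univ.sup' univ_nonempty (J m)) :=
          hm0eq.symm
  exact absurd (hreg π) (not_le.mpr hlt)
end
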